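/- arXiv:2007.02261 — 16 statements merged into one kernel-verified Lean document; each statement's English description precedes it below -/
import Mathlib

section
/- Transitivity of correspondence under relational composition: If (ρ₁,p₁) ⊒_r (ρ₂,p₂) and (ρ₂,p₂) ⊒_s (ρ₃,p₃), then (ρ₁,p₁) ⊒_{r∘s} (ρ₃,p₃), where r∘s = {(a,b) | ∃ c, (a,c) ∈ r ∧ (c,b) ∈ s} is the relational composition. -/
inductive Lang (α : Type) : Type
  | skip : Lang α
  | basic : (α → α) → Lang α
  | cjump : (α → Prop) → ℕ → Lang α → Lang α
  | while : (α → Prop) → Lang α → Lang α → Lang α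
  | ite : (α → Prop) → Lang α → Lang α → Lang α
  | seq : Lang α → Lang α → Lang α
  | par : List (Lang α) → Lang α
  | await : (α → Prop) → Lang α → Lang α

inductive PStep {α : Type} (ρ : ℕ → Lang α) : Lang α × α → Lang α × α → Prop
  | basic {f : α → α} {σ : α} : PStep ρ (Lang.basic f, σ) (Lang.skip, f σ)
  | cjumpT {C : α → Prop} {i : ℕ} {p : Lang α} {σ : α} (h : C σ) :
      PStep ρ (Lang.cjump C i p, σ) (ρ i, σ)
  | cjumpF {C : α → Prop} {i : ℕ} {p : Lang α} {σ : α} (h : ¬ C σ) :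
      PStep ρ (Lang.cjump C i p, σ) (p, σ)
  | await {C : α → Prop} {p : Lang α} {σ σ' : α} (h : C σ)
      (n : ℕ) (f : ℕ → Lang α × α)
      (h0 : f 0 = (p, σ)) (hn : f n = (Lang.skip, σ'))
      (hstep : ∀ i, i < n → PStep ρ (f i) (f (i + 1))) :
      PStep ρ (Lang.await C p, σ) (Lang.skip, σ')
  | iteT {C : α → Prop} {p₁ p₂ : Lang α} {σ : α} (h : C σ) :
      PStep ρ (Lang.ite C p₁ p₂, σ) (p₁, σ)
  | iteF {C : α → Prop} {p₁ p₂ : Lang α} {σ : α} (h : ¬ C σ) :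
      PStep ρ (Lang.ite C p₁ p₂, σ) (p₂, σ)
  | whileT {C : α → Prop} {p₁ p₂ : Lang α} {σ : α} (h : C σ) :
      PStep ρ (Lang.while C p₁ p₂, σ)
        (Lang.seq p₁ (Lang.seq Lang.skip (Lang.while C p₁ p₂)), σ)
  | whileF {C : α → Prop} {p₁ p₂ : Lang α} {σ : α} (h : ¬ C σ) :
      PStep ρ (Lang.while C p₁ p₂, σ) (p₂, σ)
  | seq {p₁ p₁' p₂ : Lang α} {σ σ' : α} (h : PStep ρ (p₁, σ) (p₁', σ')) :
      PStep ρ (Lang.seq p₁ p₂, σ) (Lang.seq p₁' p₂, σ')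
  | seqSkip {p : Lang α} {σ : α} : PStep ρ (Lang.seq Lang.skip p, σ) (p, σ)
  | par {ps : List (Lang α)} {i : ℕ} {p' : Lang α} {σ σ' : α}
      (hi : i < ps.length) (h : PStep ρ (ps.get ⟨i, hi⟩, σ) (p', σ')) :
      PStep ρ (Lang.par ps, σ) (Lang.par (ps.set i p'), σ')
  | parSkip {ps : List (Lang α)} {σ : α} (hne : ps ≠ [])
      (h : ∀ p ∈ ps, p = Lang.skip) :
      PStep ρ (Lang.par ps, σ) (Lang.skip, σ)

def IsSimulation {α β : Type} (ρ : ℕ → Lang α) (ρ' : ℕ → Lang β)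
    (r : α → β → Prop) (X : Lang α → Lang β → Prop) : Prop :=
  (∀ p q σ₁ σ₂ q' σ₂', X p q → r σ₁ σ₂ → PStep ρ' (q, σ₂) (q', σ₂') →
      ∃ p' σ₁', PStep ρ (p, σ₁) (p', σ₁') ∧ X p' q' ∧ r σ₁' σ₂') ∧
  (∀ q, X Lang.skip q → q = Lang.skip) ∧
  (∀ p, X p Lang.skip → p = Lang.skip)

def Corr {α β : Type} (ρ : ℕ → Lang α) (p : Lang α) (r : α → β → Prop)
    (ρ' : ℕ → Lang β) (q : Lang β) : Prop :=
  ∃ X, IsSimulation ρ ρ' r X ∧ X p q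

def MutCorr {α β : Type} (ρ : ℕ → Lang α) (p : Lang α) (r : α → β → Prop)
    (ρ' : ℕ → Lang β) (q : Lang β) : Prop :=
  Corr ρ p r ρ' q ∧ Corr ρ' q (fun b a => r a b) ρ p

theorem IsSimulation.comp {α β γ : Type} {ρ₁ : ℕ → Lang α} {ρ₂ : ℕ → Lang β} {ρ₃ : ℕ → Lang γ}
    {r : α → β → Prop} {s : β → γ → Prop} {X : Lang α → Lang β → Prop}
    {Y : Lang β → Lang γ → Prop} (hX : IsSimulation ρ₁ ρ₂ r X) (hY : IsSimulation ρ₂ ρ₃ s Y) :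
    IsSimulation ρ₁ ρ₃ (Relation.Comp r s) (Relation.Comp X Y) := by
  obtain ⟨hX_step, hX_skip_left, hX_skip_right⟩ := hX
  obtain ⟨hY_step, hY_skip_left, hY_skip_right⟩ := hY
  refine ⟨?_, ?_, ?_⟩
  · rintro p q σ₁ σ₃ q' σ₃' ⟨m, hpm, hmq⟩ ⟨σ₂, hr, hs⟩ hq
    obtain ⟨m', σ₂', hm, hm'q', hs'⟩ := hY_step m q σ₂ σ₃ q' σ₃' hmq hs hq
    obtain ⟨p', σ₁', hp, hp'm', hr'⟩ := hX_step p m σ₁ σ₂ m' σ₂' hpm hr hm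
    exact ⟨p', σ₁', hp, ⟨m', hp'm', hm'q'⟩, σ₂', hr', hs'⟩
  · rintro q ⟨m, hm, hmq⟩
    exact hY_skip_left q (hX_skip_left m hm ▸ hmq)
  · rintro p ⟨m, hpm, hm⟩
    exact hX_skip_right p (hY_skip_right m hm ▸ hpm)

theorem corr_trans {α β γ : Type} (ρ₁ : ℕ → Lang α) (ρ₂ : ℕ → Lang β) (ρ₃ : ℕ → Lang γ)
    (p₁ : Lang α) (p₂ : Lang β) (p₃ : Lang γ)
    (r : α → β → Prop) (s : β → γ → Prop)
    (h₁ : Corr ρ₁ p₁ r ρ₂ p₂) (h₂ : Corr ρ₂ p₂ s ρ₃ p₃) :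
    Corr ρ₁ p₁ (fun a c => ∃ b, r a b ∧ s b c) ρ₃ p₃ := by
  obtain ⟨X, hX, hp₁p₂⟩ := h₁
  obtain ⟨Y, hY, hp₂p₃⟩ := h₂
  exact ⟨Relation.Comp X Y, hX.comp hY, p₂, hp₁p₂, hp₂p₃⟩
end

section
/- Associativity of sequential composition up to mutual correspondence: for any ρ : ℕ → 𝓛 α and any p₁, p₂, p₃ : 𝓛 α, the programs (ρ, p₁ ; (p₂ ; p₃)) and (ρ, (p₁ ; p₂) ; p₃) mutually correspond with respect to the identity state relation, i.e. (ρ, p₁ ; (p₂ ; p₃)) ≈ (ρ, (p₁ ; p₂) ; p₃). -/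
/-!
The relation pairing `a ; (b ; c)` with `(a ; b) ; c`, together with the identity, is a
simulation in both directions: a step of either side is a step of `a` (matched by the same
step of `a` on the other side) or, when `a = skip`, the step discarding it, after which both
sides have become `b ; c`.
-/

namespace Lang

variable {α : Type}

inductive SeqAssoc : Lang α → Lang α → Prop
  | refl (p : Lang α) : SeqAssoc p p
  | assoc (a b c : Lang α) : SeqAssoc (seq a (seq b c)) (seq (seq a b) c)

theorem SeqAssoc.eq_skip_of_skip_left {q : Lang α} (h : SeqAssoc skip q) : q = skip := by
  cases h
  rfl

theorem SeqAssoc.eq_skip_of_skip_right {p : Lang α} (h : SeqAssoc p skip) : p = skip := by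
  cases h
  rfl

end Lang

open Lang

namespace PStep

variable {α : Type} {ρ : ℕ → Lang α}

theorem seq_inv {a b x : Lang α} {σ σ' : α} (h : PStep ρ (Lang.seq a b, σ) (x, σ')) :
    (∃ a', x = Lang.seq a' b ∧ PStep ρ (a, σ) (a', σ')) ∨ (a = Lang.skip ∧ x = b ∧ σ' = σ) := by
  cases h with
  | seq h => exact Or.inl ⟨_, rfl, h⟩
  | seqSkip => exact Or.inr ⟨rfl, rfl, rfl⟩

theorem exists_rightAssoc_of_leftAssoc {a b c q' : Lang α} {σ σ' : α}
    (h : PStep ρ (Lang.seq (Lang.seq a b) c, σ) (q', σ')) :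
    ∃ p', PStep ρ (Lang.seq a (Lang.seq b c), σ) (p', σ') ∧ SeqAssoc p' q' := by
  rcases seq_inv h with ⟨ab', rfl, hab⟩ | ⟨hab, -, -⟩
  · rcases seq_inv hab with ⟨a', rfl, ha⟩ | ⟨rfl, rfl, rfl⟩
    · exact ⟨_, seq ha, SeqAssoc.assoc a' b c⟩
    · exact ⟨_, seqSkip, SeqAssoc.refl _⟩
  · cases hab

theorem exists_leftAssoc_of_rightAssoc {a b c p' : Lang α} {σ σ' : α}
    (h : PStep ρ (Lang.seq a (Lang.seq b c), σ) (p', σ')) :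
    ∃ q', PStep ρ (Lang.seq (Lang.seq a b) c, σ) (q', σ') ∧ SeqAssoc p' q' := by
  rcases seq_inv h with ⟨a', rfl, ha⟩ | ⟨rfl, rfl, rfl⟩
  · exact ⟨_, seq (seq ha), SeqAssoc.assoc a' b c⟩
  · exact ⟨_, seq seqSkip, SeqAssoc.refl _⟩

end PStep

namespace Lang

variable {α : Type} {ρ : ℕ → Lang α}

theorem SeqAssoc.isSimulation : IsSimulation ρ ρ (fun a b => a = b) SeqAssoc := by
  refine ⟨?_, fun _ => SeqAssoc.eq_skip_of_skip_left, fun _ => SeqAssoc.eq_skip_of_skip_right⟩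
  rintro p q σ σ q' σ' (_ | ⟨a, b, c⟩) rfl hstep
  · exact ⟨q', σ', hstep, SeqAssoc.refl _, rfl⟩
  · obtain ⟨p', hp', hX⟩ := PStep.exists_rightAssoc_of_leftAssoc hstep
    exact ⟨p', σ', hp', hX, rfl⟩

theorem SeqAssoc.isSimulation_flip :
    IsSimulation ρ ρ (fun b a => a = b) (flip SeqAssoc) := by
  refine ⟨?_, fun _ => SeqAssoc.eq_skip_of_skip_right, fun _ => SeqAssoc.eq_skip_of_skip_left⟩
  rintro q p σ σ p' σ' (_ | ⟨a, b, c⟩) rfl hstep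
  · exact ⟨p', σ', hstep, SeqAssoc.refl _, rfl⟩
  · obtain ⟨q', hq', hX⟩ := PStep.exists_leftAssoc_of_rightAssoc hstep
    exact ⟨q', σ', hq', hX, rfl⟩

end Lang

theorem seq_assoc {α : Type} (ρ : ℕ → Lang α) (p₁ p₂ p₃ : Lang α) :
    MutCorr ρ (Lang.seq p₁ (Lang.seq p₂ p₃)) (fun a b => a = b) ρ
      (Lang.seq (Lang.seq p₁ p₂) p₃) :=
  ⟨⟨SeqAssoc, SeqAssoc.isSimulation, SeqAssoc.assoc p₁ p₂ p₃⟩,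
    ⟨flip SeqAssoc, SeqAssoc.isSimulation_flip, SeqAssoc.assoc p₁ p₂ p₃⟩⟩
end

section
/- Commutativity of parallel composition up to mutual correspondence: let m > 0, let π be a permutation of {1,…,m}, and assume qᵢ = p_{π(i)} for all i ∈ {1,…,m}. Then (ρ, Parallel [p₁,…,pₘ]) ≈ (ρ, Parallel [q₁,…,qₘ]) with respect to the identity state relation. -/
/-
Reordering the components of a parallel composition is a simulation: a step of the `i`-th
component of `Parallel (ps ∘ π)` is matched by the same step of the `π i`-th component of
`Parallel ps`, and the two results are again related by `π` (updating commutes with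
precomposition by a permutation); the final step to `skip` only asks that all components be
`skip`, which is invariant under reordering. Applying this to `π` and to `π⁻¹` gives both
correspondences.
-/

theorem List.set_ofFn {β : Type*} {m : ℕ} (f : Fin m → β) (i : Fin m) (v : β) :
    (List.ofFn f).set i v = List.ofFn (Function.update f i v) := by
  apply List.ext_getElem
  · simp
  · intro n h₁ h₂
    simp only [List.getElem_set, List.getElem_ofFn, Function.update_apply, Fin.ext_iff]
    split_ifs <;> first | rfl | omega

namespace Lang

variable {α : Type} {m : ℕ}

def ParPerm (π : Equiv.Perm (Fin m)) (p q : Lang α) : Prop :=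
  (∃ ps : Fin m → Lang α, p = par (List.ofFn ps) ∧ q = par (List.ofFn (ps ∘ π))) ∨
    (p = skip ∧ q = skip)

end Lang

namespace PStep

variable {α : Type} {ρ : ℕ → Lang α} {m : ℕ}

theorem par_ofFn {ps : Fin m → Lang α} {i : Fin m} {p' : Lang α} {σ σ' : α}
    (h : PStep ρ (ps i, σ) (p', σ')) :
    PStep ρ (Lang.par (List.ofFn ps), σ)
      (Lang.par (List.ofFn (Function.update ps i p')), σ') := by
  rw [← List.set_ofFn]
  exact PStep.par (by simp) (by simpa using h)

theorem parSkip_ofFn [NeZero m] {ps : Fin m → Lang α} {σ : α} (h : ∀ i, ps i = Lang.skip) :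
    PStep ρ (Lang.par (List.ofFn ps), σ) (Lang.skip, σ) :=
  PStep.parSkip (by simp [NeZero.ne m]) (List.forall_mem_ofFn_iff.2 h)

theorem par_ofFn_cases {ps : Fin m → Lang α} {q' : Lang α} {σ σ' : α}
    (h : PStep ρ (Lang.par (List.ofFn ps), σ) (q', σ')) :
    (∃ i p', PStep ρ (ps i, σ) (p', σ') ∧
        q' = Lang.par (List.ofFn (Function.update ps i p'))) ∨
      (NeZero m ∧ (∀ i, ps i = Lang.skip) ∧ q' = Lang.skip ∧ σ' = σ) := by
  cases h with
  | @par _ i p' _ _ hi hstep =>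
    have him : i < m := by simpa using hi
    refine .inl ⟨⟨i, him⟩, p', by simpa using hstep, ?_⟩
    rw [← List.set_ofFn]
  | parSkip hne hskip =>
    exact .inr ⟨⟨by simpa [List.ofFn_eq_nil_iff] using hne⟩,
      List.forall_mem_ofFn_iff.1 hskip, rfl, rfl⟩

theorem exists_of_par_ofFn_comp {ps : Fin m → Lang α} {π : Equiv.Perm (Fin m)}
    {q' : Lang α} {σ σ' : α} (h : PStep ρ (Lang.par (List.ofFn (ps ∘ π)), σ) (q', σ')) :
    ∃ p', PStep ρ (Lang.par (List.ofFn ps), σ) (p', σ') ∧ Lang.ParPerm π p' q' := by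
  rcases par_ofFn_cases h with ⟨i, p', hstep, rfl⟩ | ⟨_, hskip, rfl, rfl⟩
  · refine ⟨_, par_ofFn (i := π i) hstep, .inl ⟨_, rfl, ?_⟩⟩
    rw [Function.update_comp_equiv, Equiv.symm_apply_apply]
  · exact ⟨_, parSkip_ofFn fun i => by simpa using hskip (π.symm i), .inr ⟨rfl, rfl⟩⟩

end PStep

theorem isSimulation_parPerm {α : Type} (ρ : ℕ → Lang α) {m : ℕ} (π : Equiv.Perm (Fin m)) :
    IsSimulation ρ ρ (· = ·) (Lang.ParPerm π) := by
  refine ⟨?_, ?_, ?_⟩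
  · rintro p q σ σ q' σ' (⟨ps, rfl, rfl⟩ | ⟨rfl, rfl⟩) rfl hstep
    · obtain ⟨p', hp', hrel⟩ := PStep.exists_of_par_ofFn_comp hstep
      exact ⟨p', σ', hp', hrel, rfl⟩
    · cases hstep
  · rintro q (⟨ps, hp, -⟩ | ⟨-, rfl⟩)
    · cases hp
    · rfl
  · rintro p (⟨ps, -, hq⟩ | ⟨rfl, -⟩)
    · cases hq
    · rfl

theorem corr_par_ofFn_comp {α : Type} (ρ : ℕ → Lang α) {m : ℕ} (π : Equiv.Perm (Fin m))
    (ps : Fin m → Lang α) :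
    Corr ρ (Lang.par (List.ofFn ps)) (· = ·) ρ (Lang.par (List.ofFn (ps ∘ π))) :=
  ⟨_, isSimulation_parPerm ρ π, .inl ⟨ps, rfl, rfl⟩⟩

theorem par_comm_general {α : Type} (ρ : ℕ → Lang α) (m : ℕ)
    (p q : Fin m → Lang α) (π : Equiv.Perm (Fin m))
    (h : ∀ i, q i = p (π i)) :
    MutCorr ρ (Lang.par (List.ofFn p)) (fun a b => a = b) ρ
      (Lang.par (List.ofFn q)) := by
  have hq : q = p ∘ π := funext h
  have hp : p = q ∘ π.symm := by
    rw [hq, Function.comp_assoc, π.self_comp_symm, Function.comp_id]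
  have eq_flip : (fun b a : α => a = b) = (· = ·) := by
    funext a b
    exact propext eq_comm
  refine ⟨?_, ?_⟩
  · rw [hq]
    exact corr_par_ofFn_comp ρ π p
  · rw [eq_flip, hp]
    exact corr_par_ofFn_comp ρ π.symm q

theorem par_comm {α : Type} (ρ : ℕ → Lang α) (m : ℕ) (hm : 0 < m)
    (p q : Fin m → Lang α) (π : Equiv.Perm (Fin m))
    (h : ∀ i, q i = p (π i)) :
    MutCorr ρ (Lang.par (List.ofFn p)) (fun a b => a = b) ρ
      (Lang.par (List.ofFn q)) :=
  par_comm_general ρ m p q π h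
end

section
/- Closure of correspondence under parallel composition: let m > 0 and assume (ρ,pᵢ) ⊒_r (ρ',qᵢ) for all i ∈ {1,…,m}. Then (ρ, Parallel [p₁,…,pₘ]) ⊒_r (ρ', Parallel [q₁,…,qₘ]). -/
/-! The union of the component simulations, lifted componentwise to parallel compositions, is
again a simulation: a step of `par qs` is a step of one component (matched by the corresponding
component of `par ps`) or the final step to `skip` once every `qs` component is `skip`, in which
case every `ps` component is `skip` too. -/

namespace List

variable {α β : Type*} {R : α → β → Prop}

theorem Forall₂.set : ∀ {l₁ : List α} {l₂ : List β}, Forall₂ R l₁ l₂ →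
    ∀ (i : ℕ) {a : α} {b : β}, R a b → Forall₂ R (l₁.set i a) (l₂.set i b)
  | _, _, .nil, _, _, _, _ => .nil
  | _, _, .cons _ hl, 0, _, _, hab => .cons hab hl
  | _, _, .cons ha hl, i + 1, _, _, hab => .cons ha (hl.set i hab)

theorem forall₂_ofFn {n : ℕ} {f : Fin n → α} {g : Fin n → β} (h : ∀ i, R (f i) (g i)) :
    Forall₂ R (ofFn f) (ofFn g) :=
  forall₂_of_length_eq_of_get (by simp) fun i hf _ => by
    simpa using h ⟨i, by simpa using hf⟩

end List

section Simulation

variable {α β : Type} {ρ : ℕ → Lang α} {ρ' : ℕ → Lang β} {r : α → β → Prop}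

theorem IsSimulation.iSup {ι : Sort*} {X : ι → Lang α → Lang β → Prop}
    (hX : ∀ i, IsSimulation ρ ρ' r (X i)) : IsSimulation ρ ρ' r (⨆ i, X i) := by
  simp only [IsSimulation, iSup_apply, iSup_Prop_eq]
  refine ⟨?_, ?_, ?_⟩
  · rintro p q σ₁ σ₂ q' σ₂' ⟨i, hpq⟩ hr hstep
    obtain ⟨p', σ₁', hstep', hpq', hr'⟩ := (hX i).1 p q σ₁ σ₂ q' σ₂' hpq hr hstep
    exact ⟨p', σ₁', hstep', ⟨i, hpq'⟩, hr'⟩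
  · rintro q ⟨i, hq⟩
    exact (hX i).2.1 q hq
  · rintro p ⟨i, hp⟩
    exact (hX i).2.2 p hp

/-- `(skip, skip)` is included because a parallel composition of `skip`s steps to `skip`. -/
inductive ParLift (X : Lang α → Lang β → Prop) : Lang α → Lang β → Prop
  | skip : ParLift X .skip .skip
  | par {ps : List (Lang α)} {qs : List (Lang β)} (hne : ps ≠ []) (h : List.Forall₂ X ps qs) :
      ParLift X (.par ps) (.par qs)

variable {X : Lang α → Lang β → Prop}

theorem IsSimulation.parLift_step (hX : IsSimulation ρ ρ' r X) {p : Lang α} {q q' : Lang β}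
    {σ₁ : α} {σ₂ σ₂' : β} (hpq : ParLift X p q) (hr : r σ₁ σ₂)
    (hstep : PStep ρ' (q, σ₂) (q', σ₂')) :
    ∃ p' σ₁', PStep ρ (p, σ₁) (p', σ₁') ∧ ParLift X p' q' ∧ r σ₁' σ₂' := by
  obtain _ | @⟨ps, qs, hne, hpqs⟩ := hpq
  · cases hstep
  have hlen := hpqs.length_eq
  cases hstep with
  | @par _ i q' _ _ hi hq =>
    have hi' : i < ps.length := hlen ▸ hi
    obtain ⟨p', σ₁', hp, hpq', hr'⟩ := hX.1 _ _ σ₁ σ₂ q' σ₂' (hpqs.get hi' hi) hr hq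
    exact ⟨_, σ₁', .par hi' hp, .par (by simpa using hne) (hpqs.set i hpq'), hr'⟩
  | parSkip _ hqs =>
    have hps : ∀ p ∈ ps, p = Lang.skip := by
      intro p hp
      obtain ⟨i, hi, rfl⟩ := List.mem_iff_getElem.mp hp
      have hi' : i < qs.length := hlen ▸ hi
      have hpq := hpqs.get hi hi'
      simp only [List.get_eq_getElem] at hpq
      rw [hqs _ (List.getElem_mem hi')] at hpq
      exact hX.2.2 _ hpq
    exact ⟨.skip, σ₁, .parSkip hne hps, .skip, hr⟩

theorem IsSimulation.parLift (hX : IsSimulation ρ ρ' r X) : IsSimulation ρ ρ' r (ParLift X) :=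
  ⟨fun _ _ _ _ _ _ hpq hr hstep => hX.parLift_step hpq hr hstep,
    fun _ h => by cases h; rfl, fun _ h => by cases h; rfl⟩

end Simulation

theorem par_corr {α β : Type} (ρ : ℕ → Lang α) (ρ' : ℕ → Lang β)
    (r : α → β → Prop) (m : ℕ) (hm : 0 < m)
    (p : Fin m → Lang α) (q : Fin m → Lang β)
    (h : ∀ i, Corr ρ (p i) r ρ' (q i)) :
    Corr ρ (Lang.par (List.ofFn p)) r ρ' (Lang.par (List.ofFn q)) := by
  choose X hX hXpq using h
  refine ⟨ParLift (⨆ i, X i), (IsSimulation.iSup hX).parLift, .par ?_ ?_⟩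
  · simpa [List.ofFn_eq_nil_iff] using hm.ne'
  · exact List.forall₂_ofFn fun i => le_iSup X i _ _ (hXpq i)
end

section
/- Closure of correspondence under sequential composition: if (ρ,p₁) ⊒_r (ρ',q₁) and (ρ,p₂) ⊒_r (ρ',q₂), then (ρ, p₁ ; p₂) ⊒_r (ρ', q₁ ; q₂). -/
/-! Pair `p₁ ; p₂` with `q₁ ; q₂` by running a simulation for the first components while both
are still in their first halves, and switch to a simulation for the second components once the
target executes `skip ; q₂ → q₂`. The switch is matched by `skip ; p₂ → p₂` on the source
side, because the first simulation relates `skip` only to `skip`. -/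

section

variable {α β : Type}

inductive SeqSim (X₁ X₂ : Lang α → Lang β → Prop) (p₂ : Lang α) (q₂ : Lang β) :
    Lang α → Lang β → Prop
  | seq {a : Lang α} {b : Lang β} : X₁ a b → SeqSim X₁ X₂ p₂ q₂ (Lang.seq a p₂) (Lang.seq b q₂)
  | tail {p : Lang α} {q : Lang β} : X₂ p q → SeqSim X₁ X₂ p₂ q₂ p q

variable {ρ : ℕ → Lang α} {ρ' : ℕ → Lang β} {r : α → β → Prop}
  {X₁ X₂ : Lang α → Lang β → Prop} {p₂ : Lang α} {q₂ : Lang β}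

theorem SeqSim.step (h₁ : IsSimulation ρ ρ' r X₁) (h₂ : IsSimulation ρ ρ' r X₂)
    (hX₂ : X₂ p₂ q₂) {p : Lang α} {q q' : Lang β} {σ₁ : α} {σ₂ σ₂' : β}
    (hpq : SeqSim X₁ X₂ p₂ q₂ p q) (hr : r σ₁ σ₂) (hq : PStep ρ' (q, σ₂) (q', σ₂')) :
    ∃ p' σ₁', PStep ρ (p, σ₁) (p', σ₁') ∧ SeqSim X₁ X₂ p₂ q₂ p' q' ∧ r σ₁' σ₂' := by
  cases hpq with
  | seq hab =>
    cases hq with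
    | seq hb =>
      obtain ⟨a', σ₁', ha, hab', hr'⟩ := h₁.1 _ _ _ _ _ _ hab hr hb
      exact ⟨_, σ₁', PStep.seq ha, SeqSim.seq hab', hr'⟩
    | seqSkip =>
      obtain rfl := h₁.2.2 _ hab
      exact ⟨p₂, σ₁, PStep.seqSkip, SeqSim.tail hX₂, hr⟩
  | tail hpq =>
    obtain ⟨p', σ₁', hp, hpq', hr'⟩ := h₂.1 _ _ _ _ _ _ hpq hr hq
    exact ⟨p', σ₁', hp, SeqSim.tail hpq', hr'⟩

theorem IsSimulation.seqSim (h₁ : IsSimulation ρ ρ' r X₁) (h₂ : IsSimulation ρ ρ' r X₂)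
    (hX₂ : X₂ p₂ q₂) : IsSimulation ρ ρ' r (SeqSim X₁ X₂ p₂ q₂) := by
  refine ⟨fun _ _ _ _ _ _ hpq hr hq => SeqSim.step h₁ h₂ hX₂ hpq hr hq, ?_, ?_⟩
  · rintro q (_ | hpq)
    exact h₂.2.1 _ hpq
  · rintro p (_ | hpq)
    exact h₂.2.2 _ hpq

end

theorem seq_corr {α β : Type} (ρ : ℕ → Lang α) (ρ' : ℕ → Lang β)
    (r : α → β → Prop) (p₁ p₂ : Lang α) (q₁ q₂ : Lang β)
    (h₁ : Corr ρ p₁ r ρ' q₁) (h₂ : Corr ρ p₂ r ρ' q₂) :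
    Corr ρ (Lang.seq p₁ p₂) r ρ' (Lang.seq q₁ q₂) := by
  obtain ⟨X₁, hsim₁, hX₁⟩ := h₁
  obtain ⟨X₂, hsim₂, hX₂⟩ := h₂
  exact ⟨_, hsim₁.seqSim hsim₂ hX₂, SeqSim.seq hX₁⟩
end

section
/- Closure of correspondence under while-statements: assume (1) (ρ,p₁) ⊒_r (ρ',p₂), (2) (ρ,q₁) ⊒_r (ρ',q₂), and (3) for any (σ₁,σ₂) ∈ r, σ₁ ∈ C₁ holds if and only if σ₂ ∈ C₂ holds. Then (ρ, while C₁ p₁ q₁) ⊒_r (ρ', while C₂ p₂ q₂). -/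
/-!
Since related states agree on the loop guards, both loops always take the same branch. So the
loops are related by the relation pairing the two loops, the two bodies in progress (related by
the body simulation) each followed by the pending `skip ; while …`, the two pending
`skip ; while …` themselves, and the two exit branches (related by the exit simulation).
-/

theorem PStep.not_skip {α : Type} {ρ : ℕ → Lang α} {σ : α} {c : Lang α × α} :
    ¬ PStep ρ (Lang.skip, σ) c := by
  rintro ⟨⟩

section WhileSim

variable {α β : Type} (X₁ X₂ : Lang α → Lang β → Prop)
  (C₁ : α → Prop) (p₁ q₁ : Lang α) (C₂ : β → Prop) (p₂ q₂ : Lang β)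

inductive WhileSim : Lang α → Lang β → Prop
  | loop : WhileSim (.while C₁ p₁ q₁) (.while C₂ p₂ q₂)
  | body {a b} : X₁ a b →
      WhileSim (.seq a (.seq .skip (.while C₁ p₁ q₁))) (.seq b (.seq .skip (.while C₂ p₂ q₂)))
  | next : WhileSim (.seq .skip (.while C₁ p₁ q₁)) (.seq .skip (.while C₂ p₂ q₂))
  | exit {a b} : X₂ a b → WhileSim a b

variable {X₁ X₂ C₁ p₁ q₁ C₂ p₂ q₂}

theorem WhileSim.isSimulation {ρ : ℕ → Lang α} {ρ' : ℕ → Lang β} {r : α → β → Prop}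
    (h₁ : IsSimulation ρ ρ' r X₁) (h₂ : IsSimulation ρ ρ' r X₂)
    (hp : X₁ p₁ p₂) (hq : X₂ q₁ q₂) (h₃ : ∀ σ₁ σ₂, r σ₁ σ₂ → (C₁ σ₁ ↔ C₂ σ₂)) :
    IsSimulation ρ ρ' r (WhileSim X₁ X₂ C₁ p₁ q₁ C₂ p₂ q₂) := by
  obtain ⟨step₁, -, skip_right₁⟩ := h₁
  obtain ⟨step₂, skip_left₂, skip_right₂⟩ := h₂
  refine ⟨?_, ?_, ?_⟩
  · intro p q σ₁ σ₂ q' σ₂' hpq hr hstep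
    cases hpq with
    | loop =>
      cases hstep with
      | whileT hC => exact ⟨_, σ₁, .whileT ((h₃ _ _ hr).2 hC), .body hp, hr⟩
      | whileF hC => exact ⟨_, σ₁, .whileF (mt (h₃ _ _ hr).1 hC), .exit hq, hr⟩
    | body hab =>
      cases hstep with
      | seq hb =>
        obtain ⟨a', σ₁', ha, hab', hr'⟩ := step₁ _ _ _ _ _ _ hab hr hb
        exact ⟨_, σ₁', .seq ha, .body hab', hr'⟩
      | seqSkip =>
        obtain rfl := skip_right₁ _ hab
        exact ⟨_, σ₁, .seqSkip, .next, hr⟩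
    | next =>
      cases hstep with
      | seq h => exact absurd h PStep.not_skip
      | seqSkip => exact ⟨_, σ₁, .seqSkip, .loop, hr⟩
    | exit hab =>
      obtain ⟨p', σ₁', hstep', hpq', hr'⟩ := step₂ _ _ _ _ _ _ hab hr hstep
      exact ⟨p', σ₁', hstep', .exit hpq', hr'⟩
  · rintro q (_ | _ | _ | hq')
    exact skip_left₂ _ hq'
  · rintro p (_ | _ | _ | hp')
    exact skip_right₂ _ hp'

end WhileSim

theorem while_corr {α β : Type} (ρ : ℕ → Lang α) (ρ' : ℕ → Lang β)
    (r : α → β → Prop) (C₁ : α → Prop) (C₂ : β → Prop)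
    (p₁ q₁ : Lang α) (p₂ q₂ : Lang β)
    (h₁ : Corr ρ p₁ r ρ' p₂) (h₂ : Corr ρ q₁ r ρ' q₂)
    (h₃ : ∀ σ₁ σ₂, r σ₁ σ₂ → (C₁ σ₁ ↔ C₂ σ₂)) :
    Corr ρ (Lang.while C₁ p₁ q₁) r ρ' (Lang.while C₂ p₂ q₂) := by
  obtain ⟨X₁, hX₁, hp⟩ := h₁
  obtain ⟨X₂, hX₂, hq⟩ := h₂
  exact ⟨_, WhileSim.isSimulation hX₁ hX₂ hp hq h₃, .loop⟩
end

section
/- Closure of correspondence under await-statements: assume (1) (ρ,p₁) ⊒_r (ρ',p₂), and (2) for any (σ₁,σ₂) ∈ r, σ₂ ∈ C₂ implies σ₁ ∈ C₁. Then (ρ, await C₁ p₁) ⊒_r (ρ', await C₂ p₂). -/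
namespace IsSimulation

variable {α β : Type} {ρ : ℕ → Lang α} {ρ' : ℕ → Lang β} {r : α → β → Prop}
  {X : Lang α → Lang β → Prop}

theorem exists_run (hX : IsSimulation ρ ρ' r X) (n : ℕ) (f : ℕ → Lang β × β)
    (hf : ∀ i < n, PStep ρ' (f i) (f (i + 1)))
    (p : Lang α) (σ : α) (hp : X p (f 0).1) (hσ : r σ (f 0).2) :
    ∃ g : ℕ → Lang α × α, g 0 = (p, σ) ∧ (∀ i < n, PStep ρ (g i) (g (i + 1))) ∧
      X (g n).1 (f n).1 ∧ r (g n).2 (f n).2 := by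
  induction n with
  | zero => exact ⟨fun _ => (p, σ), rfl, nofun, hp, hσ⟩
  | succ n ih =>
    obtain ⟨g, hg0, hg, hgX, hgr⟩ := ih fun i hi => hf i (by omega)
    obtain ⟨p', σ', hstep, hX', hr'⟩ :=
      hX.1 _ _ _ _ (f (n + 1)).1 (f (n + 1)).2 hgX hgr (hf n n.lt_succ_self)
    refine ⟨fun i => if i ≤ n then g i else (p', σ'), by simpa using hg0, ?_, ?_, ?_⟩
    · intro i hi
      rcases Nat.lt_or_ge i n with hin | hin
      · simpa [hin.le, Nat.succ_le_of_lt hin] using hg i hin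
      · obtain rfl : i = n := by omega
        simpa using hstep
    · simpa using hX'
    · simpa using hr'

theorem await (hX : IsSimulation ρ ρ' r X) {p₁ : Lang α} {p₂ : Lang β}
    (hp : X p₁ p₂) {C₁ : α → Prop} {C₂ : β → Prop} (hC : ∀ σ₁ σ₂, r σ₁ σ₂ → C₂ σ₂ → C₁ σ₁) :
    IsSimulation ρ ρ' r fun p q =>
      (p = Lang.await C₁ p₁ ∧ q = Lang.await C₂ p₂) ∨ (p = Lang.skip ∧ q = Lang.skip) := by
  refine ⟨?_, ?_, ?_⟩
  · rintro p q σ₁ σ₂ q' σ₂' (⟨rfl, rfl⟩ | ⟨rfl, rfl⟩) hr hstep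
    · cases hstep with
      | await hC₂ n f h0 hn hf =>
        obtain ⟨g, hg0, hg, hgX, hgr⟩ :=
          hX.exists_run n f hf p₁ σ₁ (by simpa [h0] using hp) (by simpa [h0] using hr)
        rw [hn] at hgX hgr
        have hgn : g n = (Lang.skip, (g n).2) := Prod.ext (hX.2.2 _ hgX) rfl
        exact ⟨Lang.skip, (g n).2, .await (hC σ₁ σ₂ hr hC₂) n g hg0 hgn hg, .inr ⟨rfl, rfl⟩, hgr⟩
    · exact absurd hstep PStep.not_skip
  · rintro q (⟨⟨⟩, -⟩ | ⟨-, rfl⟩)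
    rfl
  · rintro p (⟨-, ⟨⟩⟩ | ⟨rfl, -⟩)
    rfl

end IsSimulation

theorem await_corr {α β : Type} (ρ : ℕ → Lang α) (ρ' : ℕ → Lang β)
    (r : α → β → Prop) (C₁ : α → Prop) (C₂ : β → Prop)
    (p₁ : Lang α) (p₂ : Lang β)
    (h₁ : Corr ρ p₁ r ρ' p₂)
    (h₂ : ∀ σ₁ σ₂, r σ₁ σ₂ → C₂ σ₂ → C₁ σ₁) :
    Corr ρ (Lang.await C₁ p₁) r ρ' (Lang.await C₂ p₂) := by
  obtain ⟨X, hX, hp⟩ := h₁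
  exact ⟨_, hX.await hp h₂, .inl ⟨rfl, rfl⟩⟩
end

section
/- Sequential normalisation of conditionals: for any ρ, state predicate C and programs p₁, p₂, q, the programs (ρ, (ite C p₁ p₂) ; q) and (ρ, ite C (p₁ ; q) (p₂ ; q)) mutually correspond with respect to the identity state relation. -/
/-
Both programs have exactly the same one-step successors: the only move of either is to evaluate
the guard and continue with `p₁ ; q` or `p₂ ; q`. So relating the two programs to each other and
every program to itself gives a simulation in each direction.
-/

namespace Lang

variable {α : Type}

theorem pStep_seq_ite_iff {ρ : ℕ → Lang α} {C : α → Prop} {p₁ p₂ q : Lang α} {σ : α}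
    {c : Lang α × α} :
    PStep ρ (seq (ite C p₁ p₂) q, σ) c ↔ PStep ρ (ite C (seq p₁ q) (seq p₂ q), σ) c := by
  constructor
  · intro hstep
    cases hstep with
    | seq hstep =>
      cases hstep with
      | iteT h => exact .iteT h
      | iteF h => exact .iteF h
  · intro hstep
    cases hstep with
    | iteT h => exact .seq (.iteT h)
    | iteF h => exact .seq (.iteF h)

theorem corr_eq_of_pStep_imp {ρ : ℕ → Lang α} {p q : Lang α} (hp : p ≠ skip) (hq : q ≠ skip)
    (h : ∀ σ c, PStep ρ (q, σ) c → PStep ρ (p, σ) c) : Corr ρ p (· = ·) ρ q := by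
  refine ⟨fun a b => (a = p ∧ b = q) ∨ a = b, ⟨?_, ?_, ?_⟩, .inl ⟨rfl, rfl⟩⟩
  · rintro _ _ σ _ q' σ' (⟨rfl, rfl⟩ | rfl) rfl hstep
    · exact ⟨q', σ', h σ _ hstep, .inr rfl, rfl⟩
    · exact ⟨q', σ', hstep, .inr rfl, rfl⟩
  · rintro _ (⟨rfl, -⟩ | rfl)
    exacts [absurd rfl hp, rfl]
  · rintro _ (⟨-, rfl⟩ | rfl)
    exacts [absurd rfl hq, rfl]

theorem mutCorr_eq_of_pStep_iff {ρ : ℕ → Lang α} {p q : Lang α} (hp : p ≠ skip)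
    (hq : q ≠ skip) (h : ∀ σ c, PStep ρ (p, σ) c ↔ PStep ρ (q, σ) c) :
    MutCorr ρ p (· = ·) ρ q := by
  refine ⟨corr_eq_of_pStep_imp hp hq fun σ c => (h σ c).2, ?_⟩
  convert corr_eq_of_pStep_imp hq hp fun σ c => (h σ c).1 using 3
  exact eq_comm

end Lang

theorem ite_seq_norm {α : Type} (ρ : ℕ → Lang α) (C : α → Prop)
    (p₁ p₂ q : Lang α) :
    MutCorr ρ (Lang.seq (Lang.ite C p₁ p₂) q) (fun a b => a = b) ρ
      (Lang.ite C (Lang.seq p₁ q) (Lang.seq p₂ q)) :=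
  Lang.mutCorr_eq_of_pStep_iff nofun nofun
    fun _ _ => Lang.pStep_seq_ite_iff
end

section
/- Sequential normalisation of while-statements: for any ρ, state predicate C and programs p₁, p₂, q, the programs (ρ, (while C p₁ p₂) ; q) and (ρ, while C p₁ (p₂ ; q)) mutually correspond with respect to the identity state relation. -/
/-! Relate `(while C p₁ p₂) ; q` to `while C p₁ (p₂ ; q)`, every program to itself, and the two
sides at each stage of a loop iteration: `(s ; skip ; while C p₁ p₂) ; q` to
`s ; skip ; while C p₁ (p₂ ; q)`, and `(skip ; while C p₁ p₂) ; q` to `skip ; while C p₁ (p₂ ; q)`.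
Each step of either side is matched by a step of the other with the same state change, landing
again in this relation; so it and its converse are simulations for the identity state relation. -/

section Bisimulation

variable {α : Type}

structure IsStrongBisimulation (ρ ρ' : ℕ → Lang α) (X : Lang α → Lang α → Prop) : Prop where
  step_right : ∀ p q q' σ σ', X p q → PStep ρ' (q, σ) (q', σ') →
    ∃ p', PStep ρ (p, σ) (p', σ') ∧ X p' q'
  step_left : ∀ p q p' σ σ', X p q → PStep ρ (p, σ) (p', σ') →
    ∃ q', PStep ρ' (q, σ) (q', σ') ∧ X p' q'
  skip_left : ∀ q, X .skip q → q = .skip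
  skip_right : ∀ p, X p .skip → p = .skip

namespace IsStrongBisimulation

variable {ρ ρ' : ℕ → Lang α} {X : Lang α → Lang α → Prop}

theorem symm (hX : IsStrongBisimulation ρ ρ' X) : IsStrongBisimulation ρ' ρ (flip X) :=
  ⟨fun _ _ _ _ _ h hs => hX.step_left _ _ _ _ _ h hs,
    fun _ _ _ _ _ h hs => hX.step_right _ _ _ _ _ h hs, hX.skip_right, hX.skip_left⟩

theorem isSimulation (hX : IsStrongBisimulation ρ ρ' X) : IsSimulation ρ ρ' (· = ·) X := by
  refine ⟨?_, hX.skip_left, hX.skip_right⟩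
  rintro p q σ _ q' σ' hpq rfl hs
  obtain ⟨p', hp, hpq'⟩ := hX.step_right p q q' σ σ' hpq hs
  exact ⟨p', σ', hp, hpq', rfl⟩

theorem mutCorr (hX : IsStrongBisimulation ρ ρ' X) {p q : Lang α} (hpq : X p q) :
    MutCorr ρ p (· = ·) ρ' q := by
  have hsymm : (fun (b a : α) => a = b) = (· = ·) := funext₂ fun _ _ => propext eq_comm
  refine ⟨⟨X, hX.isSimulation, hpq⟩, ?_⟩
  rw [hsymm]
  exact ⟨flip X, hX.symm.isSimulation, hpq⟩

end IsStrongBisimulation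

end Bisimulation

inductive WhileSeqRel {α : Type} (C : α → Prop) (p₁ p₂ q : Lang α) :
    Lang α → Lang α → Prop
  | refl (s : Lang α) : WhileSeqRel C p₁ p₂ q s s
  | loop : WhileSeqRel C p₁ p₂ q (.seq (.while C p₁ p₂) q) (.while C p₁ (.seq p₂ q))
  | body (s : Lang α) :
      WhileSeqRel C p₁ p₂ q (.seq (.seq s (.seq .skip (.while C p₁ p₂))) q)
        (.seq s (.seq .skip (.while C p₁ (.seq p₂ q))))
  | back : WhileSeqRel C p₁ p₂ q (.seq (.seq .skip (.while C p₁ p₂)) q)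
      (.seq .skip (.while C p₁ (.seq p₂ q)))

namespace WhileSeqRel

variable {α : Type} {ρ : ℕ → Lang α} {C : α → Prop} {p₁ p₂ q : Lang α}

theorem step_right {a b b' : Lang α} {σ σ' : α} (hab : WhileSeqRel C p₁ p₂ q a b)
    (hs : PStep ρ (b, σ) (b', σ')) :
    ∃ a', PStep ρ (a, σ) (a', σ') ∧ WhileSeqRel C p₁ p₂ q a' b' := by
  cases hab with
  | refl => exact ⟨b', hs, .refl _⟩
  | loop =>
    cases hs with
    | whileT h => exact ⟨_, .seq (.whileT h), .body p₁⟩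
    | whileF h => exact ⟨_, .seq (.whileF h), .refl _⟩
  | body =>
    cases hs with
    | seq h => exact ⟨_, .seq (.seq h), .body _⟩
    | seqSkip => exact ⟨_, .seq .seqSkip, .back⟩
  | back =>
    cases hs with
    | seq h => cases h
    | seqSkip => exact ⟨_, .seq .seqSkip, .loop⟩

theorem step_left {a b a' : Lang α} {σ σ' : α} (hab : WhileSeqRel C p₁ p₂ q a b)
    (hs : PStep ρ (a, σ) (a', σ')) :
    ∃ b', PStep ρ (b, σ) (b', σ') ∧ WhileSeqRel C p₁ p₂ q a' b' := by
  cases hab with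
  | refl => exact ⟨a', hs, .refl _⟩
  | loop =>
    cases hs with
    | seq h =>
      cases h with
      | whileT h => exact ⟨_, .whileT h, .body p₁⟩
      | whileF h => exact ⟨_, .whileF h, .refl _⟩
  | body =>
    cases hs with
    | seq h =>
      cases h with
      | seq h => exact ⟨_, .seq h, .body _⟩
      | seqSkip => exact ⟨_, .seqSkip, .back⟩
  | back =>
    cases hs with
    | seq h =>
      cases h with
      | seq h => cases h
      | seqSkip => exact ⟨_, .seqSkip, .loop⟩

theorem isStrongBisimulation : IsStrongBisimulation ρ ρ (WhileSeqRel C p₁ p₂ q) where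
  step_right _ _ _ _ _ := step_right
  step_left _ _ _ _ _ := step_left
  skip_left _ h := by cases h; rfl
  skip_right _ h := by cases h; rfl

end WhileSeqRel

theorem while_seq_norm {α : Type} (ρ : ℕ → Lang α) (C : α → Prop)
    (p₁ p₂ q : Lang α) :
    MutCorr ρ (Lang.seq (Lang.while C p₁ p₂) q) (fun a b => a = b) ρ
      (Lang.while C p₁ (Lang.seq p₂ q)) :=
  WhileSeqRel.isStrongBisimulation.mutCorr .loop
end

section
/- Replacing conditionals by conditional jumps: for any ρ, state predicate C, program p and label j, the programs (ρ, ite C p (ρ j)) and (ρ, cjump (¬C) j p) mutually correspond with respect to the identity state relation, where ¬C denotes the complement of the state predicate C. -/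
/-! From every state, `ite C p (ρ j)` and `cjump (¬C) j p` have exactly the same steps (to `p` when
`C` holds, to `ρ j` otherwise), and after that step both sides continue as the same program, where
the identity relation is a simulation. -/

section

variable {α : Type} {ρ : ℕ → Lang α}

theorem corr_eq_of_forall_pstep {p q : Lang α} (hp : p ≠ Lang.skip) (hq : q ≠ Lang.skip)
    (h : ∀ σ c, PStep ρ (q, σ) c → PStep ρ (p, σ) c) :
    Corr ρ p (fun a b => a = b) ρ q := by
  refine ⟨fun p' q' => (p' = p ∧ q' = q) ∨ p' = q', ⟨?_, ?_, ?_⟩, Or.inl ⟨rfl, rfl⟩⟩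
  · rintro p₀ q₀ σ₁ σ₂ q' σ₂' (⟨rfl, rfl⟩ | rfl) rfl hstep
    · exact ⟨q', σ₂', h _ _ hstep, Or.inr rfl, rfl⟩
    · exact ⟨q', σ₂', hstep, Or.inr rfl, rfl⟩
  · rintro q₀ (⟨rfl, -⟩ | rfl)
    exacts [absurd rfl hp, rfl]
  · rintro p₀ (⟨-, rfl⟩ | rfl)
    exacts [absurd rfl hq, rfl]

theorem mutCorr_eq_of_pstep_iff {p q : Lang α} (hp : p ≠ Lang.skip) (hq : q ≠ Lang.skip)
    (h : ∀ σ c, PStep ρ (p, σ) c ↔ PStep ρ (q, σ) c) :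
    MutCorr ρ p (fun a b => a = b) ρ q := by
  have hsymm : (fun b a : α => a = b) = fun a b => a = b := by
    funext a b
    exact propext eq_comm
  refine ⟨corr_eq_of_forall_pstep hp hq fun σ c => (h σ c).2, ?_⟩
  rw [hsymm]
  exact corr_eq_of_forall_pstep hq hp fun σ c => (h σ c).1

theorem pstep_ite_iff_pstep_cjump_not {C : α → Prop} {p : Lang α} {j : ℕ} {σ : α}
    {c : Lang α × α} :
    PStep ρ (Lang.ite C p (ρ j), σ) c ↔ PStep ρ (Lang.cjump (fun σ => ¬ C σ) j p, σ) c := by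
  constructor
  · intro hstep
    cases hstep with
    | iteT hC => exact PStep.cjumpF (not_not_intro hC)
    | iteF hC => exact PStep.cjumpT hC
  · intro hstep
    cases hstep with
    | cjumpT hC => exact PStep.iteF hC
    | cjumpF hC => exact PStep.iteT (not_not.mp hC)

end

theorem ite_cjump_norm {α : Type} (ρ : ℕ → Lang α) (C : α → Prop)
    (p : Lang α) (j : ℕ) :
    MutCorr ρ (Lang.ite C p (ρ j)) (fun a b => a = b) ρ
      (Lang.cjump (fun σ => ¬ C σ) j p) :=
  mutCorr_eq_of_pstep_iff nofun nofun fun _ _ =>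
    pstep_ite_iff_pstep_cjump_not
end

section
/- Replacing while-statements by jumps: assume (1) ρ i = cjump (¬C) j (p ; jump i) and (2) ρ j = q, where jump i := cjump ⊤ i skip (with ⊤ the universal state predicate) and ¬C denotes the complement of the state predicate C, and where i and j are labels. Then (ρ, while C p q) ≈ (ρ, cjump (¬C) j (p ; jump i)) with respect to the identity state relation. -/
/-- The unconditional jump: cjump with the universal state predicate and skip. -/
def Lang.jump {α : Type} (i : ℕ) : Lang α :=
  Lang.cjump (fun _ => True) i Lang.skip

/- The simulation follows the two programs in lockstep: the loop test of `while C p q` is matched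
by the conditional jump, a step of the body by the same step inside `p' ; jump i`, and the final
`skip ; while C p q ⟶ while C p q` by the jump back to label `i`, whose code is again the jump
program. Leaving the loop lands both sides on `q = ρ j`, after which they coincide. Matched steps
act identically on the state, so the identity state relation is preserved. -/

theorem isSimulation_eq_of_step {α : Type} {ρ ρ' : ℕ → Lang α} {X : Lang α → Lang α → Prop}
    (step : ∀ p q σ q' σ', X p q → PStep ρ' (q, σ) (q', σ') →
      ∃ p', PStep ρ (p, σ) (p', σ') ∧ X p' q')
    (skip_left : ∀ q, X Lang.skip q → q = Lang.skip)
    (skip_right : ∀ p, X p Lang.skip → p = Lang.skip) :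
    IsSimulation ρ ρ' (fun a b => a = b) X := by
  refine ⟨?_, skip_left, skip_right⟩
  rintro p q σ₁ σ₂ q' σ₂' hpq rfl hstep
  obtain ⟨p', hp', hX⟩ := step p q σ₁ q' σ₂' hpq hstep
  exact ⟨p', σ₂', hp', hX, rfl⟩

theorem mutCorr_eq_of_isSimulation {α : Type} {ρ ρ' : ℕ → Lang α} {X : Lang α → Lang α → Prop}
    {p q : Lang α} (hX : IsSimulation ρ ρ' (fun a b => a = b) X)
    (hX' : IsSimulation ρ' ρ (fun a b => a = b) (flip X)) (hpq : X p q) :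
    MutCorr ρ p (fun a b => a = b) ρ' q := by
  have eq_flip : (fun b a : α => a = b) = fun a b => a = b := by
    funext a b
    exact propext eq_comm
  exact ⟨⟨X, hX, hpq⟩, ⟨flip X, eq_flip ▸ hX', hpq⟩⟩

section WhileJump

variable {α : Type} {C : α → Prop} {p q : Lang α} {i j : ℕ}

inductive WhileJumpRel (C : α → Prop) (p q : Lang α) (i j : ℕ) : Lang α → Lang α → Prop
  | refl (r : Lang α) : WhileJumpRel C p q i j r r
  | loop : WhileJumpRel C p q i j (Lang.while C p q)
      (Lang.cjump (fun σ => ¬ C σ) j (Lang.seq p (Lang.jump i)))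
  | body (p' : Lang α) : WhileJumpRel C p q i j
      (Lang.seq p' (Lang.seq Lang.skip (Lang.while C p q))) (Lang.seq p' (Lang.jump i))
  | back : WhileJumpRel C p q i j (Lang.seq Lang.skip (Lang.while C p q)) (Lang.jump i)

theorem WhileJumpRel.eq_skip_of_left {r : Lang α} (h : WhileJumpRel C p q i j Lang.skip r) :
    r = Lang.skip := by
  cases h; rfl

theorem WhileJumpRel.eq_skip_of_right {r : Lang α} (h : WhileJumpRel C p q i j r Lang.skip) :
    r = Lang.skip := by
  cases h; rfl

variable {ρ : ℕ → Lang α}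

theorem WhileJumpRel.while_step_of_jump_step
    (h₁ : ρ i = Lang.cjump (fun σ => ¬ C σ) j (Lang.seq p (Lang.jump i))) (h₂ : ρ j = q)
    {a b b' : Lang α} {σ σ' : α}
    (hX : WhileJumpRel C p q i j a b) (hstep : PStep ρ (b, σ) (b', σ')) :
    ∃ a', PStep ρ (a, σ) (a', σ') ∧ WhileJumpRel C p q i j a' b' := by
  subst h₂
  cases hX with
  | refl => exact ⟨b', hstep, .refl b'⟩
  | loop =>
    cases hstep with
    | cjumpT hC => exact ⟨ρ j, .whileF hC, .refl _⟩
    | cjumpF hC => exact ⟨_, .whileT (not_not.mp hC), .body p⟩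
  | body p' =>
    cases hstep with
    | seq h => exact ⟨_, .seq h, .body _⟩
    | seqSkip => exact ⟨_, .seqSkip, .back⟩
  | back =>
    cases hstep with
    | cjumpT _ => exact ⟨_, .seqSkip, h₁ ▸ .loop⟩
    | cjumpF h => exact absurd trivial h

theorem WhileJumpRel.jump_step_of_while_step
    (h₁ : ρ i = Lang.cjump (fun σ => ¬ C σ) j (Lang.seq p (Lang.jump i))) (h₂ : ρ j = q)
    {a a' b : Lang α} {σ σ' : α}
    (hX : WhileJumpRel C p q i j a b) (hstep : PStep ρ (a, σ) (a', σ')) :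
    ∃ b', PStep ρ (b, σ) (b', σ') ∧ WhileJumpRel C p q i j a' b' := by
  subst h₂
  cases hX with
  | refl => exact ⟨a', hstep, .refl a'⟩
  | loop =>
    cases hstep with
    | whileT hC => exact ⟨_, .cjumpF (not_not_intro hC), .body p⟩
    | whileF hC => exact ⟨ρ j, .cjumpT hC, .refl _⟩
  | body p' =>
    cases hstep with
    | seq h => exact ⟨_, .seq h, .body _⟩
    | seqSkip => exact ⟨_, .seqSkip, .back⟩
  | back =>
    cases hstep with
    | seq h => cases h
    | seqSkip => exact ⟨_, .cjumpT trivial, h₁ ▸ .loop⟩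

end WhileJump

theorem while_cjump_norm {α : Type} (ρ : ℕ → Lang α) (C : α → Prop)
    (p q : Lang α) (i j : ℕ)
    (h₁ : ρ i = Lang.cjump (fun σ => ¬ C σ) j (Lang.seq p (Lang.jump i)))
    (h₂ : ρ j = q) :
    MutCorr ρ (Lang.while C p q) (fun a b => a = b) ρ
      (Lang.cjump (fun σ => ¬ C σ) j (Lang.seq p (Lang.jump i))) := by
  refine mutCorr_eq_of_isSimulation (X := WhileJumpRel C p q i j) ?_ ?_ .loop
  · exact isSimulation_eq_of_step
      (fun _ _ _ _ _ hX hstep => hX.while_step_of_jump_step h₁ h₂ hstep)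
      (fun _ => WhileJumpRel.eq_skip_of_left) (fun _ => WhileJumpRel.eq_skip_of_right)
  · exact isSimulation_eq_of_step
      (fun _ _ _ _ _ hX hstep => hX.jump_step_of_while_step h₁ h₂ hstep)
      (fun _ => WhileJumpRel.eq_skip_of_right) (fun _ => WhileJumpRel.eq_skip_of_left)
end

section
/- Replay of finite potential computations along correspondences: assume (ρ,p) ⊒_r (ρ',q), sq^q is a finite potential computation of (ρ',q) satisfying the environment condition E(R'), and r ∘ R' ⊆ R ∘ r (relational composition). Further let σ be a state with (σ, state(sq^q₀)) ∈ r. Then there exists a finite potential computation sq^p of (ρ,p) of the same length as sq^q such that: (1) state(sq^p₀) = σ; (2) sq^p satisfies E(R); (3) (state(sq^pᵢ), state(sq^qᵢ)) ∈ r for all i < |sq^q|; (4) (ρ, prog(sq^pᵢ)) ⊒_r (ρ', prog(sq^qᵢ)) for all i < |sq^q|; and (5) for all i < |sq^q| − 1, the step from sq^pᵢ to sq^pᵢ₊₁ is an environment step iff the step from sq^qᵢ to sq^qᵢ₊₁ is an environment step. -/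
/-- A finite potential computation of (ρ, p): a nonempty sequence of `n`
configurations `c 0, …, c (n-1)`, where the step from `c i` to `c (i+1)` is
an environment step when `e i = true` (program part unchanged) and a program
step otherwise. -/
def IsComp {α : Type} (ρ : ℕ → Lang α) (p : Lang α)
    (n : ℕ) (c : ℕ → Lang α × α) (e : ℕ → Bool) : Prop :=
  0 < n ∧ (c 0).1 = p ∧
  ∀ i, i + 1 < n →
    (e i = true → (c (i + 1)).1 = (c i).1) ∧
    (e i = false → PStep ρ (c i) (c (i + 1)))

/-- Environment condition E(R). -/
def EnvC {α : Type} (R : α → α → Prop) (n : ℕ)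
    (c : ℕ → Lang α × α) (e : ℕ → Bool) : Prop :=
  ∀ i, i + 1 < n → e i = true → R (c i).2 (c (i + 1)).2

/-- Program condition Pr(G). -/
def ProgC {α : Type} (G : α → α → Prop) (n : ℕ)
    (c : ℕ → Lang α × α) (e : ℕ → Bool) : Prop :=
  ∀ i, i + 1 < n → e i = false → G (c i).2 (c (i + 1)).2

/-- Output condition Out(Q): the state of the first skip-configuration
(if any) satisfies Q. -/
def OutC {α : Type} (Q : α → Prop) (n : ℕ) (c : ℕ → Lang α × α) : Prop :=
  ∀ i, i < n → (c i).1 = Lang.skip → (∀ j, j < i → (c j).1 ≠ Lang.skip) →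
    Q (c i).2

/-- Extended Hoare triple over finite potential computations:
ρ ⊨ {R,P} p {Q,G}. -/
def HoareValid {α : Type} (ρ : ℕ → Lang α) (R : α → α → Prop) (P : α → Prop)
    (p : Lang α) (Q : α → Prop) (G : α → α → Prop) : Prop :=
  ∀ n c e, IsComp ρ p n c e → EnvC R n c e → P (c 0).2 →
    OutC Q n c ∧ ProgC G n c e

/-! The replaying computation is built step by step, keeping the invariant that its current
configuration is related to the current one of `c` by a fixed simulation `X` (on programs) and
by `r` (on states). A program step of `c` is answered through `X`; an environment step `R'` of
`c` is answered by an environment step `R`, which exists because `r ∘ R' ⊆ R ∘ r`. -/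

theorem exists_seq_of_forall_exists_step {A : Type*} (P : ℕ → A → Prop) (Q : ℕ → A → A → Prop)
    {a₀ : A} (h₀ : P 0 a₀) (hstep : ∀ i a, P i a → ∃ a', Q i a a' ∧ P (i + 1) a') :
    ∃ f : ℕ → A, f 0 = a₀ ∧ ∀ i, P i (f i) ∧ Q i (f i) (f (i + 1)) := by
  have hstep' : ∀ i a, ∃ a', P i a → Q i a a' ∧ P (i + 1) a' := fun i a =>
    (em (P i a)).elim (fun ha => (hstep i a ha).imp fun _ h _ => h) fun ha => ⟨a, fun h => absurd h ha⟩
  choose g hg using hstep'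
  let f : ℕ → A := fun i => Nat.rec a₀ g i
  have hP : ∀ i, P i (f i) := by
    intro i
    induction i with
    | zero => exact h₀
    | succ i ih => exact (hg i (f i) ih).2
  exact ⟨f, rfl, fun i => ⟨hP i, (hg i (f i) (hP i)).1⟩⟩

def CompStep {α : Type} (ρ : ℕ → Lang α) (R : α → α → Prop) (b : Bool)
    (x y : Lang α × α) : Prop :=
  (b = true → y.1 = x.1 ∧ R x.2 y.2) ∧ (b = false → PStep ρ x y)

theorem isComp_and_envC_iff {α : Type} {ρ : ℕ → Lang α} {R : α → α → Prop} {p : Lang α}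
    {n : ℕ} {c : ℕ → Lang α × α} {e : ℕ → Bool} :
    IsComp ρ p n c e ∧ EnvC R n c e ↔
      0 < n ∧ (c 0).1 = p ∧ ∀ i, i + 1 < n → CompStep ρ R (e i) (c i) (c (i + 1)) := by
  constructor
  · rintro ⟨⟨hn, hc0, hstep⟩, henv⟩
    exact ⟨hn, hc0, fun i hi =>
      ⟨fun he => ⟨(hstep i hi).1 he, henv i hi he⟩, (hstep i hi).2⟩⟩
  · rintro ⟨hn, hc0, hstep⟩
    exact ⟨⟨hn, hc0, fun i hi => ⟨fun he => ((hstep i hi).1 he).1, (hstep i hi).2⟩⟩,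
      fun i hi he => ((hstep i hi).1 he).2⟩

theorem IsSimulation.exists_compStep {α β : Type} {ρ : ℕ → Lang α} {ρ' : ℕ → Lang β}
    {r : α → β → Prop} {R : α → α → Prop} {R' : β → β → Prop} {X : Lang α → Lang β → Prop}
    (hX : IsSimulation ρ ρ' r X) (hcomp : ∀ a b b', r a b → R' b b' → ∃ a', R a a' ∧ r a' b')
    {b : Bool} {x : Lang α × α} {y y' : Lang β × β} (hxy : X x.1 y.1 ∧ r x.2 y.2)
    (hy : CompStep ρ' R' b y y') :
    ∃ x', CompStep ρ R b x x' ∧ X x'.1 y'.1 ∧ r x'.2 y'.2 := by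
  cases b with
  | true =>
    obtain ⟨hprog, hR'⟩ := hy.1 rfl
    obtain ⟨σ', hR, hr⟩ := hcomp _ _ _ hxy.2 hR'
    exact ⟨(x.1, σ'), ⟨fun _ => ⟨rfl, hR⟩, nofun⟩, hprog ▸ hxy.1, hr⟩
  | false =>
    obtain ⟨p', σ', hstep, hX', hr⟩ := hX.1 _ _ _ _ _ _ hxy.1 hxy.2 (hy.2 rfl)
    exact ⟨(p', σ'), ⟨nofun, fun _ => hstep⟩, hX', hr⟩

theorem corr_replay {α β : Type} (ρ : ℕ → Lang α) (ρ' : ℕ → Lang β)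
    (r : α → β → Prop) (R : α → α → Prop) (R' : β → β → Prop)
    (p : Lang α) (q : Lang β)
    (n : ℕ) (c : ℕ → Lang β × β) (e : ℕ → Bool)
    (hcorr : Corr ρ p r ρ' q)
    (hq : IsComp ρ' q n c e) (henv : EnvC R' n c e)
    (hcomp : ∀ a b b', r a b → R' b b' → ∃ a', R a a' ∧ r a' b')
    (σ : α) (hσ : r σ (c 0).2) :
    ∃ (c' : ℕ → Lang α × α) (e' : ℕ → Bool),
      IsComp ρ p n c' e' ∧
      (c' 0).2 = σ ∧
      EnvC R n c' e' ∧
      (∀ i, i < n → r (c' i).2 (c i).2) ∧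
      (∀ i, i < n → Corr ρ (c' i).1 r ρ' (c i).1) ∧
      (∀ i, i + 1 < n → e' i = e i) := by
  obtain ⟨X, hX, hXpq⟩ := hcorr
  obtain ⟨hn, hc0, hstep⟩ := isComp_and_envC_iff.mp ⟨hq, henv⟩
  obtain ⟨c', hc'0, hc'⟩ := exists_seq_of_forall_exists_step
    (fun i x => i < n → X x.1 (c i).1 ∧ r x.2 (c i).2)
    (fun i x x' => i + 1 < n → CompStep ρ R (e i) x x') (a₀ := (p, σ))
    (fun _ => ⟨hc0 ▸ hXpq, hσ⟩)
    (fun i x hx =>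
      if hi : i + 1 < n then
        (hX.exists_compStep hcomp (hx (by omega)) (hstep i hi)).imp
          fun _ h => ⟨fun _ => h.1, fun _ => h.2⟩
      else ⟨x, (absurd · hi), (absurd · hi)⟩)
  obtain ⟨hc'comp, hc'env⟩ :=
    isComp_and_envC_iff.mpr ⟨hn, by rw [hc'0], fun i hi => (hc' i).2 hi⟩
  exact ⟨c', e, hc'comp, by rw [hc'0], hc'env, fun i hi => ((hc' i).1 hi).2,
    fun i hi => ⟨X, hX, ((hc' i).1 hi).1⟩, fun _ _ => rfl⟩
end

section
/- Finite computations suffice for extended Hoare triples: for any code retrieving function ρ, program p, state relations R and G and state predicates P and Q, the triple ρ ⊨ᵢ {R,P} p {Q,G} (validity over both finite and infinite potential computations) holds if and only if ρ ⊨ {R,P} p {Q,G} (validity over finite potential computations) holds. -/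
/-- An infinite potential computation of (ρ, p). -/
def IsCompI {α : Type} (ρ : ℕ → Lang α) (p : Lang α)
    (c : ℕ → Lang α × α) (e : ℕ → Bool) : Prop :=
  (c 0).1 = p ∧
  ∀ i, (e i = true → (c (i + 1)).1 = (c i).1) ∧
       (e i = false → PStep ρ (c i) (c (i + 1)))

def EnvCI {α : Type} (R : α → α → Prop)
    (c : ℕ → Lang α × α) (e : ℕ → Bool) : Prop :=
  ∀ i, e i = true → R (c i).2 (c (i + 1)).2

def ProgCI {α : Type} (G : α → α → Prop)
    (c : ℕ → Lang α × α) (e : ℕ → Bool) : Prop :=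
  ∀ i, e i = false → G (c i).2 (c (i + 1)).2

def OutCI {α : Type} (Q : α → Prop) (c : ℕ → Lang α × α) : Prop :=
  ∀ i, (c i).1 = Lang.skip → (∀ j, j < i → (c j).1 ≠ Lang.skip) → Q (c i).2

/-- Extended Hoare triple over both finite and infinite potential
computations: ρ ⊨ᵢ {R,P} p {Q,G}. -/
def HoareValidI {α : Type} (ρ : ℕ → Lang α) (R : α → α → Prop) (P : α → Prop)
    (p : Lang α) (Q : α → Prop) (G : α → α → Prop) : Prop :=
  HoareValid ρ R P p Q G ∧
  ∀ c e, IsCompI ρ p c e → EnvCI R c e → P (c 0).2 →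
    OutCI Q c ∧ ProgCI G c e

section Prefix

variable {α : Type} {ρ : ℕ → Lang α} {p : Lang α} {c : ℕ → Lang α × α} {e : ℕ → Bool}

theorem IsCompI.isComp (hc : IsCompI ρ p c e) {n : ℕ} (hn : 0 < n) : IsComp ρ p n c e :=
  ⟨hn, hc.1, fun i _ => hc.2 i⟩

theorem EnvCI.envC {R : α → α → Prop} (hR : EnvCI R c e) (n : ℕ) : EnvC R n c e :=
  fun i _ => hR i

/-- Out(Q) at index `i` and Pr(G) at step `i` are already decided on the finite prefixes of
lengths `i + 1` and `i + 2`. -/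
theorem HoareValid.outCI_and_progCI {R G : α → α → Prop} {P Q : α → Prop}
    (h : HoareValid ρ R P p Q G) (hc : IsCompI ρ p c e) (hR : EnvCI R c e) (hP : P (c 0).2) :
    OutCI Q c ∧ ProgCI G c e := by
  have hprefix (n : ℕ) (hn : 0 < n) := h n c e (hc.isComp hn) (hR.envC n) hP
  refine ⟨fun i hskip hfirst => ?_, fun i hprog => ?_⟩
  · exact (hprefix (i + 1) i.succ_pos).1 i i.lt_succ_self hskip hfirst
  · exact (hprefix (i + 2) (by omega)).2 i (by omega) hprog

end Prefix

theorem hoareValidI_iff_hoareValid {α : Type} (ρ : ℕ → Lang α)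
    (R G : α → α → Prop) (P Q : α → Prop) (p : Lang α) :
    HoareValidI ρ R P p Q G ↔ HoareValid ρ R P p Q G :=
  ⟨And.left, fun h => ⟨h, fun _ _ => h.outCI_and_progCI⟩⟩
end

section
/- Program correspondence rule for extended Hoare triples: assume (ρ,p) ⊒_r (ρ',q), ρ ⊨ {R,P} p {Q,G}, and (1) r ∘ R' ⊆ R ∘ r (relational composition), (2) P' ⊆ r '' P (image of P under r), (3) r '' Q ⊆ Q', (4) r⁻¹ ∘ G ∘ r ⊆ G'. Then ρ' ⊨ {R',P'} q {Q',G'}. -/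
/-!
A simulation `X` lets every computation of `(ρ', q)` be shadowed, configuration by configuration,
by a computation of `(ρ, p)`: program steps of `q` are matched by program steps of `p` (this is the
simulation property), and environment steps allowed by `R'` are matched by environment steps
allowed by `R` (condition (1)), keeping the programs related by `X` and the states by `r`.
Starting the shadow in a state given by (2), it satisfies `E(R)` and `In(P)`, hence `Out(Q)` and
`Pr(G)`; these transfer back to the original computation through (3) and (4), using that `X`
relates `skip` only to `skip`, so both computations reach `skip` first at the same index.
-/

theorem exists_seq_of_forall_exists_step_s15 {γ : Type*} (Inv : ℕ → γ → Prop)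
    (Step : ℕ → γ → γ → Prop) {x₀ : γ} (h₀ : Inv 0 x₀)
    (hstep : ∀ i x, Inv i x → ∃ y, Inv (i + 1) y ∧ Step i x y) :
    ∃ d : ℕ → γ, d 0 = x₀ ∧ ∀ i, Inv i (d i) ∧ Step i (d i) (d (i + 1)) := by
  choose f hf using hstep
  let s : (i : ℕ) → {x // Inv i x} :=
    fun i => Nat.rec ⟨x₀, h₀⟩ (fun i x => ⟨f i x x.2, (hf i x x.2).1⟩) i
  exact ⟨fun i => (s i).1, rfl, fun i => ⟨(s i).2, (hf i _ (s i).2).2⟩⟩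

section Shadow

variable {α β : Type} {ρ : ℕ → Lang α} {ρ' : ℕ → Lang β} {r : α → β → Prop}
  {X : Lang α → Lang β → Prop} {n : ℕ} {d : ℕ → Lang α × α} {c : ℕ → Lang β × β}

def Shadows (X : Lang α → Lang β → Prop) (r : α → β → Prop) (n : ℕ)
    (d : ℕ → Lang α × α) (c : ℕ → Lang β × β) : Prop :=
  ∀ i < n, X (d i).1 (c i).1 ∧ r (d i).2 (c i).2

theorem IsSimulation.exists_shadow {R : α → α → Prop} {R' : β → β → Prop} {P : α → Prop}
    {p : Lang α} {q : Lang β} {e : ℕ → Bool} (hsim : IsSimulation ρ ρ' r X) (hpq : X p q)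
    (hR : ∀ a b b', r a b → R' b b' → ∃ a', R a a' ∧ r a' b')
    (hc : IsComp ρ' q n c e) (henv : EnvC R' n c e) {a₀ : α} (hPa₀ : P a₀)
    (hra₀ : r a₀ (c 0).2) :
    ∃ d, IsComp ρ p n d e ∧ EnvC R n d e ∧ P (d 0).2 ∧ Shadows X r n d c := by
  obtain ⟨hn, hc0, hcstep⟩ := hc
  have hlift : ∀ i (x : Lang α × α), (i < n → X x.1 (c i).1 ∧ r x.2 (c i).2) →
      ∃ y : Lang α × α, (i + 1 < n → X y.1 (c (i + 1)).1 ∧ r y.2 (c (i + 1)).2) ∧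
        (i + 1 < n → (e i = true → y.1 = x.1 ∧ R x.2 y.2) ∧ (e i = false → PStep ρ x y)) := by
    intro i x hx
    by_cases hi : i + 1 < n
    · obtain ⟨hX, hr⟩ := hx (by omega)
      cases he : e i
      · obtain ⟨p', a', hstep, hX', hr'⟩ := hsim.1 _ _ _ _ _ _ hX hr ((hcstep i hi).2 he)
        exact ⟨(p', a'), fun _ => ⟨hX', hr'⟩, fun _ => ⟨nofun, fun _ => hstep⟩⟩
      · obtain ⟨a', hRa', hra'⟩ := hR _ _ _ hr (henv i hi he)
        exact ⟨(x.1, a'), fun _ => ⟨(hcstep i hi).1 he ▸ hX, hra'⟩,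
          fun _ => ⟨fun _ => ⟨rfl, hRa'⟩, nofun⟩⟩
    · exact ⟨x, fun h => absurd h hi, fun h => absurd h hi⟩
  obtain ⟨d, hd0, hd⟩ := exists_seq_of_forall_exists_step_s15 _ _ (x₀ := (p, a₀))
    (fun _ => ⟨hc0 ▸ hpq, hra₀⟩) hlift
  refine ⟨d, ⟨hn, by rw [hd0], fun i hi => ?_⟩, fun i hi he => (((hd i).2 hi).1 he).2,
    by rw [hd0]; exact hPa₀, fun i hi => (hd i).1 hi⟩
  exact ⟨fun he => (((hd i).2 hi).1 he).1, ((hd i).2 hi).2⟩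

theorem Shadows.outC {Q : α → Prop} {Q' : β → Prop} (hshadow : Shadows X r n d c)
    (hskipL : ∀ q, X Lang.skip q → q = Lang.skip) (hskipR : ∀ p, X p Lang.skip → p = Lang.skip)
    (hQ : ∀ a b, Q a → r a b → Q' b) (hout : OutC Q n d) : OutC Q' n c := by
  intro i hi hci hfirst
  have hdi : (d i).1 = Lang.skip := hskipR _ (hci ▸ (hshadow i hi).1)
  refine hQ _ _ (hout i hi hdi fun j hj hdj => hfirst j hj ?_) (hshadow i hi).2
  exact hskipL _ (hdj ▸ (hshadow j (hj.trans hi)).1)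

theorem Shadows.progC {e : ℕ → Bool} {G : α → α → Prop} {G' : β → β → Prop}
    (hshadow : Shadows X r n d c) (hG : ∀ a a' b b', r a b → G a a' → r a' b' → G' b b')
    (hprog : ProgC G n d e) : ProgC G' n c e := fun i hi he =>
  hG _ _ _ _ (hshadow i (by omega)).2 (hprog i hi he) (hshadow (i + 1) hi).2

end Shadow

theorem corr_hoare_rule {α β : Type} (ρ : ℕ → Lang α) (ρ' : ℕ → Lang β)
    (r : α → β → Prop) (p : Lang α) (q : Lang β)
    (R G : α → α → Prop) (R' G' : β → β → Prop)
    (P Q : α → Prop) (P' Q' : β → Prop)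
    (hcorr : Corr ρ p r ρ' q)
    (hH : HoareValid ρ R P p Q G)
    (h1 : ∀ a b b', r a b → R' b b' → ∃ a', R a a' ∧ r a' b')
    (h2 : ∀ b, P' b → ∃ a, P a ∧ r a b)
    (h3 : ∀ a b, Q a → r a b → Q' b)
    (h4 : ∀ a a' b b', r a b → G a a' → r a' b' → G' b b') :
    HoareValid ρ' R' P' q Q' G' := by
  obtain ⟨X, hsim, hpq⟩ := hcorr
  intro n c e hc henv hP'
  obtain ⟨a₀, hPa₀, hra₀⟩ := h2 _ hP'
  obtain ⟨d, hd, henvd, hPd, hshadow⟩ := hsim.exists_shadow hpq h1 hc henv hPa₀ hra₀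
  obtain ⟨hout, hprog⟩ := hH n d e hd henvd hPd
  exact ⟨hshadow.outC hsim.2.1 hsim.2.2 h3 hout, hshadow.progC h4 hprog⟩
end

section
/- Rely/guarantee rule for parallel composition: let I = {1,…,m} with m > 0, let G be a reflexive state relation, and assume (1) P ⊆ ⋂_{k∈I} P_k; (2) R ⊆ ⋂_{k∈I} R_k; (3) for every k ∈ I, ρ ⊨ {R_k, P_k} p_k {Q_k, (⋂_{l∈I∖{k}} R_l) ∩ G}; (4) for every k ∈ I, R_k '' Q_k ⊆ Q_k (stability of Q_k under R_k); (5) ⋂_{k∈I} Q_k ⊆ Q. Then ρ ⊨ {R, P} Parallel [p₁,…,pₘ] {Q, G}. -/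
/-! Project a computation of `Lang.par ps` onto each component `k`: a step counts as a program
step of component `k` exactly when it is a program step updating component `k`, and as an
environment step otherwise. Before the parallel program terminates, each projection is a
potential computation of `ps[k]`. By induction along the computation, every environment step
of a projection is either an environment step of the whole program, hence in `R ⊆ R_k`, or a
program step of another component `l`, whose guarantee yields `R_k`; so the premises of the
triple for `ps[k]` hold on every prefix. Its guarantee then gives `G` for each program step, and
when the parallel program terminates all components have reached `skip`, where their
postconditions hold by stability, so `Q` holds. -/

section Computation

variable {α : Type} {ρ : ℕ → Lang α} {p : Lang α} {n : ℕ} {c : ℕ → Lang α × α}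
  {e : ℕ → Bool} {i j : ℕ}

theorem not_pStep_of_skip {s t : Lang α × α} (hs : s.1 = .skip) : ¬ PStep ρ s t := by
  obtain ⟨q, σ⟩ := s
  obtain rfl : q = .skip := hs
  nofun

namespace IsComp

theorem fst_zero (hc : IsComp ρ p n c e) : (c 0).1 = p := hc.2.1

theorem fst_succ (hc : IsComp ρ p n c e) (hi : i + 1 < n) (he : e i = true) :
    (c (i + 1)).1 = (c i).1 :=
  (hc.2.2 i hi).1 he

theorem pStep (hc : IsComp ρ p n c e) (hi : i + 1 < n) (he : e i = false) :
    PStep ρ (c i) (c (i + 1)) :=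
  (hc.2.2 i hi).2 he

theorem env_of_skip (hc : IsComp ρ p n c e) (hi : i + 1 < n) (hs : (c i).1 = .skip) :
    e i = true := by
  by_contra he
  exact not_pStep_of_skip hs (hc.pStep hi (by simpa using he))

theorem skip_of_le (hc : IsComp ρ p n c e) (hij : i ≤ j) (hj : j < n)
    (hs : (c i).1 = .skip) : (c j).1 = .skip := by
  induction j, hij using Nat.le_induction with
  | base => exact hs
  | succ j _ ih =>
    have hsj := ih (by omega)
    rw [hc.fst_succ hj (hc.env_of_skip hj hsj), hsj]

theorem stable_of_skip {R : α → α → Prop} {Q : α → Prop} (hc : IsComp ρ p n c e)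
    (hR : EnvC R n c e) (hQ : ∀ σ σ', Q σ → R σ σ' → Q σ') (hs : (c i).1 = .skip)
    (hQi : Q (c i).2) (hij : i ≤ j) (hj : j < n) : Q (c j).2 := by
  induction j, hij using Nat.le_induction with
  | base => exact hQi
  | succ j hij ih =>
    have hsj := hc.skip_of_le hij (by omega) hs
    exact hQ _ _ (ih (by omega)) (hR j hj (hc.env_of_skip hj hsj))

theorem post_of_skip {R : α → α → Prop} {Q : α → Prop} (hc : IsComp ρ p n c e)
    (hR : EnvC R n c e) (hQ : ∀ σ σ', Q σ → R σ σ' → Q σ') (hout : OutC Q n c) (hi : i < n)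
    (hs : (c i).1 = .skip) : Q (c i).2 := by
  classical
  have hex : ∃ j, (c j).1 = .skip := ⟨i, hs⟩
  have hfirst := hout _ (by have := Nat.find_min' hex hs; omega) (Nat.find_spec hex)
    fun j hj => Nat.find_min hex hj
  exact hc.stable_of_skip hR hQ (Nat.find_spec hex) hfirst (Nat.find_min' hex hs) hi

end IsComp

theorem EnvC.snoc {R : α → α → Prop} (h : EnvC R (i + 1) c e)
    (hi : e i = true → R (c i).2 (c (i + 1)).2) : EnvC R (i + 2) c e := by
  intro j hj he
  rcases Nat.lt_or_ge (j + 1) (i + 1) with hlt | hge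
  · exact h j hlt he
  · obtain rfl : j = i := by omega
    exact hi he

end Computation

section Parallel

variable {α : Type} {ρ : ℕ → Lang α} {l₀ : List (Lang α)} {n : ℕ} {c : ℕ → Lang α × α}
  {e : ℕ → Bool} {i : ℕ}

def component (k : ℕ) : Lang α → Lang α
  | .par ps => ps.getD k .skip
  | _ => .skip

theorem component_par_ofFn {m : ℕ} (p : Fin m → Lang α) (k : Fin m) :
    component k (.par (List.ofFn p)) = p k := by
  simp [component]

def ParStepAt (ρ : ℕ → Lang α) (s t : Lang α × α) (j : ℕ) : Prop :=
  ∃ (ps : List (Lang α)) (q : Lang α) (hj : j < ps.length),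
    s.1 = .par ps ∧ t.1 = .par (ps.set j q) ∧ PStep ρ (ps[j], s.2) (q, t.2)

theorem pStep_par_cases {ps : List (Lang α)} {s t : Lang α × α} (hs : s.1 = .par ps)
    (h : PStep ρ s t) :
    (∃ j, ParStepAt ρ s t j) ∨ (t = (.skip, s.2) ∧ ∀ q ∈ ps, q = .skip) := by
  obtain ⟨_, σ⟩ := s
  obtain rfl : _ = Lang.par ps := hs
  cases h with
  | par hj h => exact .inl ⟨_, ps, _, hj, rfl, rfl, by simpa using h⟩
  | parSkip _ hall => exact .inr ⟨rfl, hall⟩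

namespace ParStepAt

variable {s t : Lang α × α} {j : ℕ}

theorem par_ne_skip (h : ParStepAt ρ s t j) : t.1 ≠ .skip := by
  obtain ⟨_, _, _, _, ht, _⟩ := h
  simp [ht]

theorem pStep_component (h : ParStepAt ρ s t j) :
    PStep ρ (component j s.1, s.2) (component j t.1, t.2) := by
  obtain ⟨ps, q, hj, hs, ht, hstep⟩ := h
  have hj' : j < (ps.set j q).length := by simpa using hj
  simpa only [component, hs, ht, List.getD_eq_getElem _ _ hj, List.getD_eq_getElem _ _ hj',
    List.getElem_set_self] using hstep

theorem component_eq {k : ℕ} (h : ParStepAt ρ s t j) (hk : k ≠ j) :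
    component k t.1 = component k s.1 := by
  obtain ⟨ps, q, -, hs, ht, -⟩ := h
  simp only [component, hs, ht, List.getD_eq_getElem?_getD, List.getElem?_set_ne hk.symm]

end ParStepAt

def componentRun (c : ℕ → Lang α × α) (k i : ℕ) : Lang α × α :=
  (component k (c i).1, (c i).2)

open Classical in
/-- Several components may satisfy `ParStepAt` at the same step (all but one of them then step to
themselves); each of them counts as taking a program step, so no choice of one is needed. -/
noncomputable def componentEnv (ρ : ℕ → Lang α) (c : ℕ → Lang α × α) (e : ℕ → Bool)
    (k i : ℕ) : Bool :=
  !decide (e i = false ∧ ParStepAt ρ (c i) (c (i + 1)) k)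

theorem componentEnv_eq_false {k : ℕ} :
    componentEnv ρ c e k i = false ↔ e i = false ∧ ParStepAt ρ (c i) (c (i + 1)) k := by
  simp [componentEnv]

namespace IsComp

theorem par_shape (hc : IsComp ρ (.par l₀) n c e) (hi : i < n) :
    (c i).1 = .skip ∨ ∃ ps, (c i).1 = .par ps ∧ ps.length = l₀.length := by
  induction i with
  | zero => exact .inr ⟨l₀, hc.fst_zero, rfl⟩
  | succ i ih =>
    rcases ih (by omega) with hs | ⟨ps, hps, hlen⟩
    · exact .inl (hc.skip_of_le (Nat.le_succ i) hi hs)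
    cases he : e i
    · rcases pStep_par_cases hps (hc.pStep hi he) with ⟨j, hj⟩ | ⟨ht, -⟩
      · obtain ⟨ps', q, -, hps', ht, -⟩ := hj
        obtain rfl : ps' = ps := Lang.par.inj (hps'.symm.trans hps)
        exact .inr ⟨_, ht, by simp [hlen]⟩
      · exact .inl (by simp [ht])
    · exact .inr ⟨ps, by rw [hc.fst_succ hi he, hps], hlen⟩

theorem exists_parStepAt (hc : IsComp ρ (.par l₀) n c e) (hi : i + 1 < n) (he : e i = false)
    (hs : (c (i + 1)).1 ≠ .skip) : ∃ j < l₀.length, ParStepAt ρ (c i) (c (i + 1)) j := by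
  have hstep := hc.pStep hi he
  rcases hc.par_shape (i := i) (by omega) with hsi | ⟨ps, hps, hlen⟩
  · exact absurd hstep (not_pStep_of_skip hsi)
  rcases pStep_par_cases hps hstep with ⟨j, hj⟩ | ⟨ht, -⟩
  · obtain ⟨ps', q, hjlt, hps', ht, hst⟩ := hj
    obtain rfl : ps' = ps := Lang.par.inj (hps'.symm.trans hps)
    exact ⟨j, hlen ▸ hjlt, ps', q, hjlt, hps', ht, hst⟩
  · exact absurd (by simp [ht]) hs

theorem par_terminate (hc : IsComp ρ (.par l₀) n c e) (hi : i + 1 < n)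
    (hsi : (c i).1 ≠ .skip) (hs : (c (i + 1)).1 = .skip) :
    (c (i + 1)).2 = (c i).2 ∧ ∀ k, component k (c i).1 = .skip := by
  have he : e i = false := by
    by_contra he
    exact hsi (hc.fst_succ hi (by simpa using he) ▸ hs)
  rcases hc.par_shape (i := i) (by omega) with hsi' | ⟨ps, hps, -⟩
  · exact absurd hsi' hsi
  rcases pStep_par_cases hps (hc.pStep hi he) with ⟨j, hj⟩ | ⟨ht, hall⟩
  · exact absurd hs hj.par_ne_skip
  refine ⟨by rw [ht], fun k => ?_⟩
  simp only [component, hps, List.getD_eq_getElem?_getD]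
  cases hk : ps[k]? with
  | none => rfl
  | some q => exact hall q (List.mem_of_getElem? hk)

end IsComp

theorem isComp_componentRun (hc : IsComp ρ (.par l₀) n c e) (hi : i < n)
    (hrun : ∀ j ≤ i, (c j).1 ≠ .skip) (k : ℕ) :
    IsComp ρ (component k (.par l₀)) (i + 1) (componentRun c k) (componentEnv ρ c e k) := by
  refine ⟨by omega, by simp [componentRun, hc.fst_zero], fun j hj => ⟨fun henv => ?_, ?_⟩⟩
  · simp only [componentRun]
    cases he : e j
    · obtain ⟨j', -, hj'⟩ := hc.exists_parStepAt (by omega) he (hrun (j + 1) (by omega))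
      refine hj'.component_eq fun hk => ?_
      subst hk
      simp [componentEnv, he, hj'] at henv
    · rw [hc.fst_succ (by omega) he]
  · exact fun henv => (componentEnv_eq_false.mp henv).2.pStep_component

end Parallel

section ParallelRule

variable {α : Type} {ρ : ℕ → Lang α} {m : ℕ} {G R : α → α → Prop} {P : α → Prop}
  {Rs : Fin m → α → α → Prop} {Ps Qs : Fin m → α → Prop} {p : Fin m → Lang α}
  {n : ℕ} {c : ℕ → Lang α × α} {e : ℕ → Bool} {i : ℕ}

theorem guarantee_of_parStepAt (h1 : ∀ σ, P σ → ∀ k, Ps k σ)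
    (h3 : ∀ k, HoareValid ρ (Rs k) (Ps k) (p k) (Qs k)
      (fun σ σ' => (∀ l, l ≠ k → Rs l σ σ') ∧ G σ σ'))
    (hc : IsComp ρ (.par (List.ofFn p)) n c e) (hP : P (c 0).2) (hi : i + 1 < n)
    (hrun : ∀ j ≤ i + 1, (c j).1 ≠ .skip) {k : Fin m}
    (hrely : EnvC (Rs k) (i + 1) (componentRun c k) (componentEnv ρ c e k))
    (he : e i = false) (hk : ParStepAt ρ (c i) (c (i + 1)) k) :
    (∀ l, l ≠ k → Rs l (c i).2 (c (i + 1)).2) ∧ G (c i).2 (c (i + 1)).2 := by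
  have hflag : componentEnv ρ c e k i = false := componentEnv_eq_false.mpr ⟨he, hk⟩
  have hck := isComp_componentRun hc hi hrun k
  rw [component_par_ofFn] at hck
  exact (h3 k _ _ _ hck (hrely.snoc (by simp [hflag])) (h1 _ hP k)).2 i (by omega) hflag

theorem envC_componentRun (h1 : ∀ σ, P σ → ∀ k, Ps k σ)
    (h2 : ∀ σ σ', R σ σ' → ∀ k, Rs k σ σ')
    (h3 : ∀ k, HoareValid ρ (Rs k) (Ps k) (p k) (Qs k)
      (fun σ σ' => (∀ l, l ≠ k → Rs l σ σ') ∧ G σ σ'))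
    (hc : IsComp ρ (.par (List.ofFn p)) n c e) (hR : EnvC R n c e) (hP : P (c 0).2)
    (hi : i < n) (hrun : ∀ j ≤ i, (c j).1 ≠ .skip) (k : Fin m) :
    EnvC (Rs k) (i + 1) (componentRun c k) (componentEnv ρ c e k) := by
  induction i generalizing k with
  | zero => intro j hj; omega
  | succ i ih =>
    have ih' := fun k => ih (by omega) (fun j hj => hrun j (by omega)) k
    refine (ih' k).snoc fun henv => ?_
    cases he : e i
    · obtain ⟨j, hjm, hj⟩ := hc.exists_parStepAt hi he (hrun _ le_rfl)
      have hjk : (⟨j, by simpa using hjm⟩ : Fin m) ≠ k := by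
        rintro rfl
        simp [componentEnv, he, hj] at henv
      exact (guarantee_of_parStepAt h1 h3 hc hP hi hrun (ih' _) he hj).1 k hjk.symm
    · exact h2 _ _ (hR i hi he) k

end ParallelRule

theorem parallel_rule_general {α : Type} (ρ : ℕ → Lang α) (m : ℕ)
    (G : α → α → Prop) (hGrefl : ∀ a, G a a)
    (R : α → α → Prop) (P Q : α → Prop)
    (Rs : Fin m → α → α → Prop) (Ps Qs : Fin m → α → Prop)
    (p : Fin m → Lang α)
    (h1 : ∀ σ, P σ → ∀ k, Ps k σ)
    (h2 : ∀ σ σ', R σ σ' → ∀ k, Rs k σ σ')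
    (h3 : ∀ k, HoareValid ρ (Rs k) (Ps k) (p k) (Qs k)
            (fun σ σ' => (∀ l, l ≠ k → Rs l σ σ') ∧ G σ σ'))
    (h4 : ∀ k σ σ', Qs k σ → Rs k σ σ' → Qs k σ')
    (h5 : ∀ σ, (∀ k, Qs k σ) → Q σ) :
    HoareValid ρ R P (Lang.par (List.ofFn p)) Q G := by
  intro n c e hc hR hP
  refine ⟨fun i hi hs hfirst => ?_, fun i hi he => ?_⟩
  · obtain ⟨t, rfl⟩ : ∃ t, i = t + 1 :=
      Nat.exists_eq_succ_of_ne_zero (by rintro rfl; simp [hc.fst_zero] at hs)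
    have hrun : ∀ j ≤ t, (c j).1 ≠ .skip := fun j hj => hfirst j (by omega)
    obtain ⟨hstate, hdone⟩ := hc.par_terminate hi (hrun t le_rfl) hs
    rw [hstate]
    refine h5 _ fun k => ?_
    have hck := isComp_componentRun hc (by omega) hrun k
    rw [component_par_ofFn] at hck
    have hrely := envC_componentRun h1 h2 h3 hc hR hP (by omega) hrun k
    exact hck.post_of_skip hrely (h4 k) (h3 k _ _ _ hck hrely (h1 _ hP k)).1 t.lt_succ_self
      (hdone k)
  · by_cases hs : (c (i + 1)).1 = .skip
    · have hsi : (c i).1 ≠ .skip := fun hsi => not_pStep_of_skip hsi (hc.pStep hi he)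
      rw [(hc.par_terminate hi hsi hs).1]
      exact hGrefl _
    · have hrun : ∀ j ≤ i + 1, (c j).1 ≠ .skip := fun j hj hsj =>
        hs (hc.skip_of_le hj hi hsj)
      obtain ⟨j, hjm, hj⟩ := hc.exists_parStepAt hi he hs
      have hrely := envC_componentRun h1 h2 h3 hc hR hP (i := i) (by omega)
        (fun j hj => hrun j (by omega)) ⟨j, by simpa using hjm⟩
      exact (guarantee_of_parStepAt h1 h3 hc hP hi hrun hrely he hj).2

theorem parallel_rule {α : Type} (ρ : ℕ → Lang α) (m : ℕ) (hm : 0 < m)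
    (G : α → α → Prop) (hGrefl : ∀ a, G a a)
    (R : α → α → Prop) (P Q : α → Prop)
    (Rs : Fin m → α → α → Prop) (Ps Qs : Fin m → α → Prop)
    (p : Fin m → Lang α)
    (h1 : ∀ σ, P σ → ∀ k, Ps k σ)
    (h2 : ∀ σ σ', R σ σ' → ∀ k, Rs k σ σ')
    (h3 : ∀ k, HoareValid ρ (Rs k) (Ps k) (p k) (Qs k)
            (fun σ σ' => (∀ l, l ≠ k → Rs l σ σ') ∧ G σ σ'))
    (h4 : ∀ k σ σ', Qs k σ → Rs k σ σ' → Qs k σ')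
    (h5 : ∀ σ, (∀ k, Qs k σ) → Q σ) :
    HoareValid ρ R P (Lang.par (List.ofFn p)) Q G :=
  parallel_rule_general ρ m G hGrefl R P Q Rs Ps Qs p h1 h2 h3 h4 h5
end

section
/- Rely/guarantee rule for await-statements: assume (1) R '' P ⊆ P (stability of P under R), and (2) for every state σ, ρ ⊨ {⊥, P ∩ C ∩ {σ}} p { {σ' | σ' ∈ Q ∧ (σ,σ') ∈ G}, ⊤ }, where ⊥ is the empty state relation and ⊤ is the universal state relation. Then ρ ⊨ {R, P} await C p {Q, G}. -/
/-!
Before its first program step a computation of `await C p` consists of environment steps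
only, so it is still at `await C p` and, by stability, still in `P`. That program step runs
`p` atomically from a state `σ ∈ P ∩ C` to `skip`; the run is an interference-free computation
of `p`, so the premise for `σ` yields the postcondition and the guarantee for this one step.
Afterwards the program is `skip`, which admits no further program steps.
-/

variable {α : Type} {ρ : ℕ → Lang α}

namespace PStep

theorem not_of_fst_eq_skip {x y : Lang α × α} (hx : x.1 = Lang.skip) : ¬ PStep ρ x y := by
  obtain ⟨q, σ⟩ := x
  subst hx
  rintro ⟨⟩

theorem await_inv {C : α → Prop} {p : Lang α} {σ : α} {y : Lang α × α}
    (h : PStep ρ (Lang.await C p, σ) y) :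
    C σ ∧ y.1 = Lang.skip ∧ ∃ (n : ℕ) (f : ℕ → Lang α × α), f 0 = (p, σ) ∧
      f n = (Lang.skip, y.2) ∧ ∀ i, i < n → PStep ρ (f i) (f (i + 1)) := by
  cases h with
  | await hC n f h0 hn hstep => exact ⟨hC, rfl, n, f, h0, hn, hstep⟩

end PStep

theorem HoareValid.post_of_run {R G : α → α → Prop} {P Q : α → Prop} {p : Lang α}
    (h : HoareValid ρ R P p Q G) {σ σ' : α} (hP : P σ) {n : ℕ} {f : ℕ → Lang α × α}
    (h0 : f 0 = (p, σ)) (hn : f n = (Lang.skip, σ'))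
    (hstep : ∀ i, i < n → PStep ρ (f i) (f (i + 1))) : Q σ' := by
  have hcomp : IsComp ρ p (n + 1) f (fun _ => false) :=
    ⟨n.succ_pos, by rw [h0], fun i hi => ⟨nofun, fun _ => hstep i (by omega)⟩⟩
  have hout := (h (n + 1) f _ hcomp (fun _ _ => nofun) (by rw [h0]; exact hP)).1
  simpa [hn] using hout n n.lt_succ_self (by rw [hn])
    (fun j hj hskip => PStep.not_of_fst_eq_skip hskip (hstep j hj))

theorem forall_lt_eq_true_or_exists_first_eq_false (e : ℕ → Bool) (i : ℕ) :
    (∀ m, m < i → e m = true) ∨ ∃ m, m < i ∧ e m = false ∧ ∀ j, j < m → e j = true := by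
  by_cases hex : ∃ m, m < i ∧ e m = false
  · classical
    refine Or.inr ⟨Nat.find hex, (Nat.find_spec hex).1, (Nat.find_spec hex).2, fun j hj => ?_⟩
    have := Nat.find_min hex hj
    grind
  · grind

section Computation

variable {q : Lang α} {n : ℕ} {c : ℕ → Lang α × α} {e : ℕ → Bool}

theorem IsComp.fst_eq_of_env_prefix (hc : IsComp ρ q n c e) {i : ℕ} (hi : i < n)
    (henv : ∀ j, j < i → e j = true) : (c i).1 = q := by
  induction i with
  | zero => exact hc.2.1
  | succ k ih =>
    rw [(hc.2.2 k hi).1 (henv k k.lt_succ_self)]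
    exact ih (by omega) fun j hj => henv j (by omega)

theorem EnvC.of_stable_of_env_prefix {R : α → α → Prop} {P : α → Prop}
    (hR : EnvC R n c e) (hstable : ∀ σ σ', P σ → R σ σ' → P σ') (hP : P (c 0).2)
    {i : ℕ} (hi : i < n) (henv : ∀ j, j < i → e j = true) : P (c i).2 := by
  induction i with
  | zero => exact hP
  | succ k ih =>
    exact hstable _ _ (ih (by omega) fun j hj => henv j (by omega))
      (hR k hi (henv k k.lt_succ_self))

theorem IsComp.fst_eq_skip_of_le (hc : IsComp ρ q n c e) {j i : ℕ}
    (hj : (c j).1 = Lang.skip) (hji : j ≤ i) (hi : i < n) : (c i).1 = Lang.skip := by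
  induction i, hji using Nat.le_induction with
  | base => exact hj
  | succ k _ ih =>
    have hk := ih (by omega)
    cases he : e k with
    | true => rw [(hc.2.2 k hi).1 he, hk]
    | false => exact absurd ((hc.2.2 k hi).2 he) (PStep.not_of_fst_eq_skip hk)

end Computation

theorem IsComp.await_first_prog_step {R G : α → α → Prop} {P Q C : α → Prop} {p : Lang α}
    (hstable : ∀ σ σ', P σ → R σ σ' → P σ')
    (hpremise : ∀ σ : α, HoareValid ρ (fun _ _ => False)
            (fun s => P s ∧ C s ∧ s = σ) p
            (fun σ' => Q σ' ∧ G σ σ') (fun _ _ => True))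
    {n : ℕ} {c : ℕ → Lang α × α} {e : ℕ → Bool} (hc : IsComp ρ (Lang.await C p) n c e)
    (hR : EnvC R n c e) (hP : P (c 0).2) (j : ℕ) (hj : j + 1 < n) (hprog : e j = false)
    (henv : ∀ m, m < j → e m = true) :
    (c (j + 1)).1 = Lang.skip ∧ Q (c (j + 1)).2 ∧ G (c j).2 (c (j + 1)).2 := by
  have hstep := (hc.2.2 j hj).2 hprog
  rw [show c j = (Lang.await C p, (c j).2) from
    Prod.ext (hc.fst_eq_of_env_prefix (by omega) henv) rfl] at hstep
  obtain ⟨hC, hskip, m, f, h0, hm, hrun⟩ := hstep.await_inv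
  exact ⟨hskip, (hpremise _).post_of_run
    ⟨hR.of_stable_of_env_prefix hstable hP (by omega) henv, hC, rfl⟩ h0 hm hrun⟩

theorem await_rule {α : Type} (ρ : ℕ → Lang α)
    (R G : α → α → Prop) (P Q C : α → Prop) (p : Lang α)
    (h1 : ∀ σ σ', P σ → R σ σ' → P σ')
    (h2 : ∀ σ : α, HoareValid ρ (fun _ _ => False)
            (fun s => P s ∧ C s ∧ s = σ) p
            (fun σ' => Q σ' ∧ G σ σ') (fun _ _ => True)) :
    HoareValid ρ R P (Lang.await C p) Q G := by
  intro n c e hc hR hP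
  have first := hc.await_first_prog_step h1 h2 hR hP
  constructor
  · intro i hi hskip hbefore
    rcases forall_lt_eq_true_or_exists_first_eq_false e i with henv | ⟨m, hmi, hm, henv⟩
    · exact absurd ((hc.fst_eq_of_env_prefix hi henv).symm.trans hskip) nofun
    · obtain ⟨hskip', hQ, -⟩ := first m (by omega) hm henv
      obtain rfl : m + 1 = i := by
        by_contra hne
        exact hbefore (m + 1) (by omega) hskip'
      exact hQ
  · intro i hi hprog
    rcases forall_lt_eq_true_or_exists_first_eq_false e i with henv | ⟨m, hmi, hm, henv⟩
    · exact (first i hi hprog henv).2.2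
    · have hskip := hc.fst_eq_skip_of_le (first m (by omega) hm henv).1 hmi (by omega)
      exact absurd ((hc.2.2 i hi).2 hprog) (PStep.not_of_fst_eq_skip hskip)
end
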